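/- arXiv:1510.05824 — 12 statements merged into one kernel-verified Lean document; each statement's English description precedes it below -/
import Mathlib

section
/- Let D be a loopless digraph on n vertices and q ≥ 2. The q-instability of D is monotone nondecreasing in q: i(D, q) ≤ i(D, q+1). Here i(D,q) is the maximum over all f : (Fin q)^n → (Fin q)^n whose interaction graph is a subgraph of D of min_x d_H(x, f(x)). -/
/-- `fv` depends essentially on coordinate `u`. -/
def dependsOn {n : ℕ} {A : Type} (fv : (Fin n → A) → A) (u : Fin n) : Prop :=
  ∃ x y : Fin n → A, (∀ w, w ≠ u → x w = y w) ∧ fv x ≠ fv y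

/-- `f` belongs to `F(D,q)`: its interaction graph is a subgraph of `D`. -/
def inF {n : ℕ} {A : Type} (D : Fin n → Fin n → Prop) (f : (Fin n → A) → (Fin n → A)) : Prop :=
  ∀ u v, dependsOn (fun x => f x v) u → D u v

/-- `I` is a feedback vertex set of `D`: removing `I` leaves no directed cycle. -/
def isFVS {n : ℕ} (D : Fin n → Fin n → Prop) (I : Finset (Fin n)) : Prop :=
  ∀ v, ¬ Relation.TransGen (fun a b => D a b ∧ a ∉ I ∧ b ∉ I) v v

/-- minimum size of a feedback vertex set. -/
noncomputable def tau {n : ℕ} (D : Fin n → Fin n → Prop) : ℕ :=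
  sInf {k | ∃ I : Finset (Fin n), isFVS D I ∧ I.card = k}

/-- the q-instability of D. -/
noncomputable def instab {n : ℕ} (D : Fin n → Fin n → Prop) (q : ℕ) : ℕ :=
  sSup {m | ∃ f : (Fin n → Fin q) → (Fin n → Fin q), inF D f ∧
    ∀ x, m ≤ hammingDist x (f x)}

/-- the q-stability of D. -/
noncomputable def stab {n : ℕ} (D : Fin n → Fin n → Prop) (q : ℕ) : ℕ :=
  sSup {m | ∃ f : (Fin n → Fin q) → (Fin n → Fin q), inF D f ∧
    ∀ x, m ≤ (Finset.univ.filter (fun v => f x v = x v)).card}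

/-- `S` is the vertex set of a directed cycle of `D`. -/
def isCycleSet {n : ℕ} (D : Fin n → Fin n → Prop) (S : Finset (Fin n)) : Prop :=
  ∃ m : ℕ, 1 ≤ m ∧ ∃ c : ZMod m → Fin n, Function.Injective c ∧
    Set.range c = ↑S ∧ ∀ i, D (c i) (c (i + 1))

/-- maximum number of pairwise vertex-disjoint cycles. -/
noncomputable def nu {n : ℕ} (D : Fin n → Fin n → Prop) : ℕ :=
  sSup {k | ∃ L : Fin k → Finset (Fin n), (∀ i, isCycleSet D (L i)) ∧
    ∀ i j, i ≠ j → Disjoint (L i) (L j)}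

/-- `S` is the vertex set of a chordless directed cycle of `D`. -/
def isChordlessCycle {n : ℕ} (D : Fin n → Fin n → Prop) (S : Finset (Fin n)) : Prop :=
  ∃ m : ℕ, 1 ≤ m ∧ ∃ c : ZMod m → Fin n, Function.Injective c ∧
    Set.range c = ↑S ∧ (∀ i, D (c i) (c (i + 1))) ∧
    ∀ i j, D (c i) (c j) → j = i + 1

/-- chromatic number of the intersection graph of chordless cycles. -/
noncomputable def chromCycles {n : ℕ} (D : Fin n → Fin n → Prop) : ℕ :=
  sInf {k | ∃ col : {S : Finset (Fin n) // isChordlessCycle D S} → Fin k,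
    ∀ S T, S.1 ≠ T.1 → (S.1 ∩ T.1).Nonempty → col S ≠ col T}

/-- the q-instability of a loopless digraph is nondecreasing in q. -/
theorem stmt1 (n q : ℕ) (hq : 2 ≤ q) (D : Fin n → Fin n → Prop)
    (hD : ∀ v, ¬ D v v) :
    instab D q ≤ instab D (q + 1) := by
  have hq0 : 0 < q := by omega
  set π : Fin (q + 1) → Fin q := fun x =>
    if h' : x.val < q then ⟨x.val, h'⟩ else ⟨0, hq0⟩ with hπ
  have hπι : ∀ a : Fin q, π a.castSucc = a := by
    intro a
    simp only [hπ, Fin.coe_castSucc, a.isLt, dif_pos]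
  apply csSup_le_csSup
  · refine ⟨n, ?_⟩
    rintro m ⟨f, _, hmin⟩
    calc m ≤ hammingDist (fun _ => (0 : Fin (q + 1))) (f fun _ => 0) := hmin _
      _ ≤ Fintype.card (Fin n) := hammingDist_le_card_fintype
      _ = n := Fintype.card_fin n
  · refine ⟨0, fun _ _ => ⟨0, hq0⟩, ?_, fun _ => Nat.zero_le _⟩
    rintro u v ⟨x, y, -, hne⟩
    exact absurd rfl hne
  · rintro m ⟨f, hf, hmin⟩
    refine ⟨fun x v => (f (π ∘ x) v).castSucc, ?_, ?_⟩
    · rintro u v ⟨x, y, hxy, hne⟩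
      refine hf u v ⟨π ∘ x, π ∘ y, fun w hw => congrArg π (hxy w hw), ?_⟩
      intro h
      exact hne (congrArg Fin.castSucc h)
    · intro x
      calc m ≤ hammingDist (π ∘ x) (f (π ∘ x)) := hmin _
        _ ≤ hammingDist x (fun v => (f (π ∘ x) v).castSucc) := by
            show (Finset.univ.filter fun v => (π ∘ x) v ≠ f (π ∘ x) v).card ≤
              (Finset.univ.filter fun v => x v ≠ (f (π ∘ x) v).castSucc).card
            apply Finset.card_le_card
            intro v hv
            simp only [Finset.mem_filter, Finset.mem_univ, true_and] at hv ⊢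
            intro h
            exact hv (by rw [Function.comp_apply, h, hπι])
end

section
/- Let D be a loopless digraph on n vertices and q ≥ 2. The q-stability of D is monotone nonincreasing in q: s(D, q) ≥ s(D, q+1), where s(D,q) is the maximum over all f in F(D,q) of min_x (n - d_H(x, f(x))). -/
/-- the q-stability of a loopless digraph is nonincreasing in q. -/
theorem stmt2 (n q : ℕ) (hq : 2 ≤ q) (D : Fin n → Fin n → Prop)
    (hD : ∀ v, ¬ D v v) :
    stab D (q + 1) ≤ stab D q := by
  have hq0 : 0 < q := by omega
  -- embedding and retraction between Fin q and Fin (q+1)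
  set ι : Fin q → Fin (q + 1) := Fin.castSucc with hι
  set π : Fin (q + 1) → Fin q :=
    fun a => if h : a.val < q then ⟨a.val, h⟩ else ⟨0, hq0⟩ with hπ
  have hπι : ∀ a : Fin q, π (ι a) = a := by
    intro a
    simp only [hπ, hι, Fin.coe_castSucc, a.isLt, dif_pos]
  apply csSup_le_csSup
  · -- bounded above by n
    refine ⟨n, ?_⟩
    rintro m ⟨f, -, hf⟩
    have : ∃ x : Fin n → Fin q, True := ⟨fun _ => ⟨0, hq0⟩, trivial⟩
    obtain ⟨x, -⟩ := this
    exact (hf x).trans ((Finset.card_filter_le _ _).trans (by simp))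
  · -- nonempty: constant function
    refine ⟨0, fun _ _ => ⟨0, Nat.succ_pos q⟩, ?_, fun x => Nat.zero_le _⟩
    rintro u v ⟨x, y, -, hxy⟩
    exact absurd rfl hxy
  · rintro m ⟨f, hfF, hf⟩
    refine ⟨fun x v => π (f (fun w => ι (x w)) v), ?_, ?_⟩
    · rintro u v ⟨x, y, hxy, hne⟩
      refine hfF u v ⟨fun w => ι (x w), fun w => ι (y w), ?_, ?_⟩
      · intro w hw; simp only [hxy w hw]
      · intro h; exact hne (by simp [h])
    · intro x
      refine (hf (fun w => ι (x w))).trans (Finset.card_le_card ?_)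
      intro v hv
      simp only [Finset.mem_filter, Finset.mem_univ, true_and] at hv ⊢
      rw [hv, hπι]
end

section
/- For any loopless digraph D on n vertices and any q ≥ 2, the q-instability of D is at most τ(D), the minimum size of a feedback vertex set of D. That is, for every f : (Fin q)^n → (Fin q)^n whose interaction graph is a subgraph of D, there exists x with d_H(x, f(x)) ≤ τ(D). -/
lemma determined {n : ℕ} {A : Type} (fv : (Fin n → A) → A) (S : Set (Fin n))
    (h : ∀ u, dependsOn fv u → u ∈ S) :
    ∀ x y : Fin n → A, (∀ u ∈ S, x u = y u) → fv x = fv y := by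
  classical
  have key : ∀ k (x y : Fin n → A), (Finset.univ.filter fun w => x w ≠ y w).card = k →
      (∀ u ∈ S, x u = y u) → fv x = fv y := by
    intro k
    induction k using Nat.strong_induction_on with
    | _ k ih =>
      intro x y hcard hxy
      by_cases hxyeq : x = y
      · rw [hxyeq]
      · obtain ⟨w, hw⟩ : ∃ w, x w ≠ y w := by
          by_contra hc; push_neg at hc; exact hxyeq (funext hc)
        have hwS : w ∉ S := fun hws => hw (hxy w hws)
        have hnd : ¬ dependsOn fv w := fun hd => hwS (h w hd)
        set x' := Function.update x w (y w) with hx'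
        have h1 : fv x = fv x' := by
          by_contra hne
          exact hnd ⟨x, x', fun u hu => (Function.update_of_ne hu _ _).symm, hne⟩
        have hsub : (Finset.univ.filter fun u => x' u ≠ y u) ⊂
            (Finset.univ.filter fun u => x u ≠ y u) := by
          constructor
          · intro u hu
            simp only [Finset.mem_filter, Finset.mem_univ, true_and] at hu ⊢
            rw [hx'] at hu
            by_cases huw : u = w
            · subst huw; simp [Function.update_self] at hu
            · rwa [Function.update_of_ne huw] at hu
          · intro hsub'
            have hmem : w ∈ Finset.univ.filter fun u => x u ≠ y u :=
              Finset.mem_filter.mpr ⟨Finset.mem_univ w, hw⟩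
            have := hsub' hmem
            simp [hx', Function.update_self] at this
        have hcard' := Finset.card_lt_card hsub
        rw [hcard] at hcard'
        have h2 : fv x' = fv y := ih _ hcard' x' y rfl (fun u hu => by
          by_cases huw : u = w
          · subst huw; simp [hx', Function.update_self]
          · rw [hx', Function.update_of_ne huw]; exact hxy u hu)
        rw [h1, h2]
  intro x y hxy
  exact key _ x y rfl hxy

/-- i(D,q) ≤ τ(D); i.e. every f ∈ F(D,q) has a point moved in ≤ τ(D) coordinates. -/
theorem stmt3 (n q : ℕ) (hq : 2 ≤ q) (D : Fin n → Fin n → Prop)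
    (hD : ∀ v, ¬ D v v) :
    instab D q ≤ tau D ∧
    ∀ f : (Fin n → Fin q) → (Fin n → Fin q), inF D f →
      ∃ x, hammingDist x (f x) ≤ tau D := by
  classical
  have hq0 : 0 < q := by omega
  let z : Fin q := ⟨0, hq0⟩
  -- univ is an FVS, so the defining set of tau is nonempty
  have hunivFVS : isFVS D (Finset.univ : Finset (Fin n)) := by
    intro v hv
    cases hv with
    | single h => exact h.2.1 (Finset.mem_univ _)
    | tail _ h => exact h.2.2 (Finset.mem_univ _)
  have htau_mem : tau D ∈ {k | ∃ I : Finset (Fin n), isFVS D I ∧ I.card = k} :=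
    Nat.sInf_mem ⟨(Finset.univ : Finset (Fin n)).card, Finset.univ, hunivFVS, rfl⟩
  obtain ⟨I, hIFVS, hIcard⟩ := htau_mem
  -- the restricted reachability relation is well-founded
  set r : Fin n → Fin n → Prop := fun a b => D a b ∧ a ∉ I ∧ b ∉ I with hr
  set R : Fin n → Fin n → Prop := fun a b => Relation.TransGen r a b with hR
  have hwf : WellFounded R := by
    letI : IsTrans (Fin n) R := ⟨fun _ _ _ => Relation.TransGen.trans⟩
    letI : IsIrrefl (Fin n) R := ⟨hIFVS⟩
    exact Finite.wellFounded_of_trans_of_irrefl R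
  have main : ∀ f : (Fin n → Fin q) → (Fin n → Fin q), inF D f →
      ∃ x, hammingDist x (f x) ≤ tau D := by
    intro f hf
    set x : Fin n → Fin q := hwf.fix (fun v ih =>
      if v ∈ I then z else f (fun u => if h : R u v then ih u h else z) v) with hx
    have hxdef : ∀ v, x v =
        if v ∈ I then z else f (fun u => if h : R u v then x u else z) v := by
      intro v
      rw [hx]
      rw [hwf.fix_eq]
    have hxI : ∀ v ∈ I, x v = z := fun v hv => by rw [hxdef v, if_pos hv]
    have hfx : ∀ v, v ∉ I → f x v = x v := by
      intro v hv
      rw [hxdef v, if_neg hv]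
      apply determined (fun y => f y v) {u | D u v} (fun u hd => hf u v hd)
      intro u hu
      by_cases huI : u ∈ I
      · by_cases hRuv : R u v
        · rw [dif_pos hRuv]
        · rw [dif_neg hRuv]; exact hxI u huI
      · have hRuv : R u v := Relation.TransGen.single ⟨hu, huI, hv⟩
        rw [dif_pos hRuv]
    refine ⟨x, ?_⟩
    rw [← hIcard]
    have hsub : (Finset.univ.filter fun v => x v ≠ f x v) ⊆ I := by
      intro v hv
      rw [Finset.mem_filter] at hv
      by_contra hvI
      exact hv.2 (hfx v hvI).symm
    calc hammingDist x (f x) = (Finset.univ.filter fun v => x v ≠ f x v).card := rfl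
      _ ≤ I.card := Finset.card_le_card hsub
  refine ⟨?_, main⟩
  have hne : ({m | ∃ f : (Fin n → Fin q) → (Fin n → Fin q), inF D f ∧
      ∀ x, m ≤ hammingDist x (f x)} : Set ℕ).Nonempty := by
    refine ⟨0, fun _ => fun _ => z, ?_, fun _ => Nat.zero_le _⟩
    intro u v hd
    obtain ⟨a, b, _, hne⟩ := hd
    exact absurd rfl hne
  apply csSup_le hne
  rintro m ⟨f, hf, hm⟩
  obtain ⟨x, hx⟩ := main f hf
  exact le_trans (hm x) hx
end

section
/- For any loopless digraph D on n vertices and any q ≥ 2, the q-instability of D is at least ν(D), the maximum number of vertex-disjoint cycles in D. That is, there exists f : (Fin q)^n → (Fin q)^n whose interaction graph is a subgraph of D such that d_H(x, f(x)) ≥ ν(D) for every x. -/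
/-- i(D,q) ≥ ν(D): some f ∈ F(D,q) moves every point in at least ν(D) coordinates. -/
theorem stmt4 (n q : ℕ) (hq : 2 ≤ q) (D : Fin n → Fin n → Prop)
    (hD : ∀ v, ¬ D v v) :
    ∃ f : (Fin n → Fin q) → (Fin n → Fin q), inF D f ∧
      ∀ x, nu D ≤ hammingDist x (f x) := by
  classical
  have hq0 : 0 < q := by omega
  set σ : Fin q → Fin q := fun a => if a = ⟨0, hq0⟩ then ⟨1, by omega⟩ else ⟨0, hq0⟩ with hσdef
  have hσ : ∀ a, σ a ≠ a := by
    intro a hcon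
    have hcon' : (if a = ⟨0, hq0⟩ then (⟨1, by omega⟩ : Fin q) else ⟨0, hq0⟩) = a := hcon
    by_cases h : a = ⟨0, hq0⟩
    · rw [if_pos h, h] at hcon'
      have h2 : (1 : ℕ) = 0 := congrArg Fin.val hcon'
      exact absurd h2 one_ne_zero
    · rw [if_neg h] at hcon'
      exact h hcon'.symm
  -- the set defining nu
  set A : Set ℕ := {k | ∃ L : Fin k → Finset (Fin n), (∀ i, isCycleSet D (L i)) ∧
    ∀ i j, i ≠ j → Disjoint (L i) (L j)} with hA
  have h0 : (0 : ℕ) ∈ A := ⟨fun i => i.elim0, fun i => i.elim0, fun i => i.elim0⟩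
  have hbdd : BddAbove A := by
    refine ⟨n, fun k hk => ?_⟩
    obtain ⟨L, hL, hdisj⟩ := hk
    have hne : ∀ i, (L i).Nonempty := by
      intro i
      obtain ⟨m, hm, c, hcinj, hrange, _⟩ := hL i
      refine ⟨c 0, ?_⟩
      rw [← Finset.mem_coe, ← hrange]
      exact ⟨0, rfl⟩
    choose v hv using hne
    have hinj : Function.Injective v := by
      intro i j hij
      by_contra hne'
      exact Finset.disjoint_left.mp (hdisj i j hne') (hv i) (hij ▸ hv j)
    calc k = Fintype.card (Fin k) := (Fintype.card_fin k).symm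
      _ ≤ Fintype.card (Fin n) := Fintype.card_le_of_injective v hinj
      _ = n := Fintype.card_fin n
  have hmem : nu D ∈ A := Nat.sSup_mem ⟨0, h0⟩ hbdd
  obtain ⟨L, hL, hdisj⟩ := hmem
  choose m hm c hcinj hcrange hcD using hL
  have hmemL : ∀ i j, c i j ∈ L i := by
    intro i j
    rw [← Finset.mem_coe, ← hcrange i]
    exact ⟨j, rfl⟩
  set z : Fin q := ⟨0, hq0⟩ with hz
  set f : (Fin n → Fin q) → Fin n → Fin q := fun x v =>
    if h : ∃ i j, c i j = v then
      (if h.choose_spec.choose = 0 then σ else id) (x (c h.choose (h.choose_spec.choose - 1)))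
    else z with hfdef
  have key : ∀ (x : Fin n → Fin q) (i i' : Fin (nu D)) (j : ZMod (m i)) (j' : ZMod (m i')),
      c i j = c i' j' →
      (if j = 0 then σ else id) (x (c i (j - 1))) = (if j' = 0 then σ else id) (x (c i' (j' - 1))) := by
    intro x i i' j j' hcc
    have hi : i = i' := by
      by_contra hne'
      exact Finset.disjoint_left.mp (hdisj i i' hne') (hmemL i j) (hcc ▸ hmemL i' j')
    subst hi
    have hj : j = j' := hcinj i hcc
    subst hj
    rfl
  have hf : ∀ x i j, f x (c i j) = (if j = 0 then σ else id) (x (c i (j - 1))) := by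
    intro x i j
    have h : ∃ i' j', c i' j' = c i j := ⟨i, j, rfl⟩
    have : f x (c i j) = (if h.choose_spec.choose = 0 then σ else id)
        (x (c h.choose (h.choose_spec.choose - 1))) := by
      rw [hfdef]
      exact dif_pos h
    rw [this]
    exact key x h.choose i h.choose_spec.choose j h.choose_spec.choose_spec
  refine ⟨f, ?_, ?_⟩
  · -- inF
    intro u v hdep
    by_cases hv : ∃ i j, c i j = v
    · obtain ⟨i, j, rfl⟩ := hv
      have hu : u = c i (j - 1) := by
        by_contra hne'
        obtain ⟨x, y, hxy, hne''⟩ := hdep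
        apply hne''
        show f x (c i j) = f y (c i j)
        have hxyp : x (c i (j - 1)) = y (c i (j - 1)) :=
          hxy _ (fun he => hne' he.symm)
        rw [hf x i j, hf y i j, hxyp]
      subst hu
      have hD' := hcD i (j - 1)
      rwa [sub_add_cancel] at hD'
    · exfalso
      obtain ⟨x, y, hxy, hne''⟩ := hdep
      apply hne''
      show f x v = f y v
      have e1 : f x v = z := by rw [hfdef]; exact dif_neg hv
      have e2 : f y v = z := by rw [hfdef]; exact dif_neg hv
      rw [e1, e2]
  · -- hamming bound
    intro x
    have hdiff : ∀ i, ∃ j : ZMod (m i), f x (c i j) ≠ x (c i j) := by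
      intro i
      by_contra hcon
      push_neg at hcon
      have hstep : ∀ j : ZMod (m i), j ≠ 0 → x (c i j) = x (c i (j - 1)) := by
        intro j hj
        have h1 := hcon j
        rw [hf x i j, if_neg hj] at h1
        exact h1.symm
      have h0' : x (c i 0) = σ (x (c i (0 - 1))) := by
        have h1 := hcon 0
        rw [hf x i 0, if_pos rfl] at h1
        exact h1.symm
      haveI : NeZero (m i) := ⟨by have := hm i; omega⟩
      have hconst : ∀ s : ℕ, s < m i → x (c i (s : ZMod (m i))) = x (c i 0) := by
        intro s
        induction s with
        | zero => intro _; norm_num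
        | succ t ih =>
          intro hlt
          have hne0 : ((t + 1 : ℕ) : ZMod (m i)) ≠ 0 := by
            rw [Ne, ZMod.natCast_eq_zero_iff]
            intro hdvd
            have := Nat.le_of_dvd (by omega) hdvd
            omega
          have h2 := hstep _ hne0
          have h3 : ((t + 1 : ℕ) : ZMod (m i)) - 1 = ((t : ℕ) : ZMod (m i)) := by
            push_cast; ring
          rw [h2, h3]
          exact ih (by omega)
      have hm1 : ((m i - 1 : ℕ) : ZMod (m i)) = (0 : ZMod (m i)) - 1 := by
        have h1 : (m i - 1) + 1 = m i := by have := hm i; omega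
        have h2 : ((m i - 1 : ℕ) : ZMod (m i)) + 1 = 0 := by
          have h3 : (((m i - 1) + 1 : ℕ) : ZMod (m i)) = 0 := by
            rw [h1, ZMod.natCast_self]
          push_cast at h3
          exact h3
        have := eq_neg_of_add_eq_zero_left h2
        rw [this]; ring
      have hfinal := hconst (m i - 1) (by have := hm i; omega)
      rw [hm1] at hfinal
      rw [hfinal] at h0'
      exact hσ _ h0'.symm
    choose j hj using hdiff
    have hcard : (Finset.univ : Finset (Fin (nu D))).card ≤
        ({v | x v ≠ f x v} : Finset (Fin n)).card := by
      apply Finset.card_le_card_of_injOn (fun i => c i (j i))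
      · intro i _
        simp only [Finset.mem_coe, Finset.mem_filter, Finset.mem_univ, true_and]
        exact fun he => hj i he.symm
      · intro i _ i' _ hcc
        have hcc' : c i (j i) = c i' (j i') := hcc
        by_contra hne'
        exact Finset.disjoint_left.mp (hdisj i i' hne') (hmemL i (j i)) (hcc' ▸ hmemL i' (j i'))
    simpa [hammingDist, Finset.card_univ] using hcard
end

section
/- For all integers n ≥ q ≥ 2, the q-instability of the complete (bidirected) graph K_n on n vertices equals n − ⌈n/q⌉. That is, the maximum over all f : (Fin q)^n → (Fin q)^n such that each local function f_v does not depend on x_v, of min_x d_H(x, f(x)), equals n − ⌈n/q⌉. -/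
/-- The block-cycle construction: `f x v = (v mod q) - sum of x over block of v minus v`. -/
def myF (n q : ℕ) [NeZero q] (x : Fin n → Fin q) (v : Fin n) : Fin q :=
  ⟨v.val % q, Nat.mod_lt _ (Nat.pos_of_ne_zero (NeZero.ne q))⟩ -
    ∑ u ∈ Finset.univ.filter (fun u : Fin n => u.val / q = v.val / q ∧ u ≠ v), x u

lemma myF_local (n q : ℕ) [NeZero q] (v : Fin n) (x y : Fin n → Fin q)
    (h : ∀ u, u ≠ v → x u = y u) : myF n q x v = myF n q y v := by
  unfold myF
  congr 1
  refine Finset.sum_congr rfl (fun u hu => ?_)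
  simp only [Finset.mem_filter] at hu
  exact h u hu.2.2

lemma myF_agree (n q : ℕ) [NeZero q] (x : Fin n → Fin q) (v : Fin n) :
    (x v = myF n q x v ↔
      (∑ u ∈ Finset.univ.filter (fun u : Fin n => u.val / q = v.val / q), x u)
        = ⟨v.val % q, Nat.mod_lt _ (Nat.pos_of_ne_zero (NeZero.ne q))⟩) := by
  have hv : v ∈ Finset.univ.filter (fun u : Fin n => u.val / q = v.val / q) := by simp
  have hers : (Finset.univ.filter (fun u : Fin n => u.val / q = v.val / q)).erase v
      = Finset.univ.filter (fun u : Fin n => u.val / q = v.val / q ∧ u ≠ v) := by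
    ext u
    simp only [Finset.mem_erase, Finset.mem_filter, Finset.mem_univ, true_and]
    tauto
  have hsplit := Finset.add_sum_erase _ x hv
  rw [hers] at hsplit
  unfold myF
  constructor
  · intro h
    rw [← hsplit, eq_comm, h, sub_add_cancel]
  · intro h
    rw [← hsplit] at h
    rw [eq_sub_iff_add_eq, h]

lemma myF_card_le (n q : ℕ) [NeZero q] (hn : 1 ≤ n) (x : Fin n → Fin q) :
    (Finset.univ.filter fun v : Fin n => x v = myF n q x v).card ≤ (n + q - 1) / q := by
  have hq : 0 < q := Nat.pos_of_ne_zero (NeZero.ne q)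
  have hk : (n + q - 1) / q = (n - 1) / q + 1 := by
    have h1 : n + q - 1 = (n - 1) + q := by omega
    rw [h1, Nat.add_div_right _ hq]
  rw [hk, ← Finset.card_range ((n - 1) / q + 1)]
  apply Finset.card_le_card_of_injOn (fun v => v.val / q)
  · intro v _
    simp only [Finset.mem_coe, Finset.mem_range]
    have : v.val ≤ n - 1 := by omega
    have := Nat.div_le_div_right (c := q) this
    omega
  · intro v hv w hw hvw
    simp only [Finset.coe_filter, Set.mem_setOf_eq, Finset.mem_univ, true_and] at hv hw
    rw [myF_agree] at hv hw
    have hset : Finset.univ.filter (fun u : Fin n => u.val / q = v.val / q)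
        = Finset.univ.filter (fun u : Fin n => u.val / q = w.val / q) := by
      simp only [hvw]
    rw [hset] at hv
    rw [hv] at hw
    have hmod : v.val % q = w.val % q := by
      have := congrArg Fin.val hw
      simpa using this
    have hvw' : v.val / q = w.val / q := hvw
    have : v.val = w.val := by
      rw [← Nat.div_add_mod v.val q, ← Nat.div_add_mod w.val q, hmod, hvw']
    exact Fin.val_injective this

lemma count_agree (n q : ℕ) (v : Fin n)
    (f : (Fin n → Fin q) → Fin n → Fin q)
    (hf : ∀ (x y : Fin n → Fin q), (∀ u, u ≠ v → x u = y u) → f x v = f y v) :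
    (Finset.univ.filter fun x : Fin n → Fin q => x v = f x v).card * q = q ^ n := by
  classical
  set G := Finset.univ.filter fun x : Fin n → Fin q => x v = f x v with hG
  set e : (Fin n → Fin q) → (Fin n → Fin q) := fun x => Function.update x v (f x v) with he
  have hmem : ∀ x : Fin n → Fin q, e x ∈ G := by
    intro x
    simp only [hG, Finset.mem_filter, Finset.mem_univ, true_and]
    have h1 : f (e x) v = f x v :=
      (hf _ _ (fun u hu => by simp [he, Function.update_of_ne hu])).symm
    simp only [he] at h1 ⊢
    simp [h1]
  have hcard := Finset.card_eq_sum_card_fiberwise (fun x (_ : x ∈ Finset.univ) => hmem x)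
  have hfib : ∀ g ∈ G, (Finset.univ.filter fun x => e x = g).card = q := by
    intro g hg
    simp only [hG, Finset.mem_filter, Finset.mem_univ, true_and] at hg
    have himg : (Finset.univ.filter fun x => e x = g)
        = Finset.univ.image (fun a : Fin q => Function.update g v a) := by
      ext x
      simp only [Finset.mem_filter, Finset.mem_univ, true_and, Finset.mem_image]
      constructor
      · intro hx
        refine ⟨x v, ?_⟩
        rw [← hx]
        ext u
        by_cases hu : u = v
        · subst hu; simp [he]
        · simp [he, Function.update_of_ne hu]
      · rintro ⟨a, rfl⟩
        have h1 : f (Function.update g v a) v = f g v :=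
          hf _ _ (fun u hu => by simp [Function.update_of_ne hu])
        simp [he, h1, Function.update_idem, ← hg, Function.update_eq_self]
    rw [himg, Finset.card_image_of_injective _ (fun a b hab => by
      have := congrFun hab v; simpa using this)]
    simp
  rw [Finset.sum_congr rfl hfib, Finset.sum_const, smul_eq_mul] at hcard
  rw [← hcard]
  simp [Finset.card_univ]

lemma exists_many (n q : ℕ) (hq : 2 ≤ q) (hn : q ≤ n)
    (f : (Fin n → Fin q) → Fin n → Fin q)
    (hf : ∀ v (x y : Fin n → Fin q), (∀ u, u ≠ v → x u = y u) → f x v = f y v) :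
    ∃ x, (n + q - 1) / q ≤ (Finset.univ.filter fun v => x v = f x v).card := by
  classical
  by_contra hcon
  push_neg at hcon
  have hq0 : 0 < q := by omega
  have hk : (n + q - 1) / q = (n - 1) / q + 1 := by
    have h1 : n + q - 1 = (n - 1) + q := by omega
    rw [h1, Nat.add_div_right _ hq0]
  have hn1 : 1 ≤ n := by omega
  -- double counting
  have hswap : ∑ x : Fin n → Fin q, (Finset.univ.filter fun v => x v = f x v).card
      = ∑ v : Fin n, (Finset.univ.filter fun x : Fin n → Fin q => x v = f x v).card := by
    simp only [Finset.card_filter]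
    exact Finset.sum_comm
  have hcount : ∀ v : Fin n,
      (Finset.univ.filter fun x : Fin n → Fin q => x v = f x v).card = q ^ (n - 1) := by
    intro v
    have h1 := count_agree n q v f (hf v)
    have h2 : q ^ n = q ^ (n - 1) * q := by
      rw [← pow_succ, Nat.sub_add_cancel hn1]
    rw [h2] at h1
    exact Nat.eq_of_mul_eq_mul_right hq0 h1
  have htot : ∑ x : Fin n → Fin q, (Finset.univ.filter fun v => x v = f x v).card
      = n * q ^ (n - 1) := by
    rw [hswap]
    simp [hcount, Finset.sum_const, Finset.card_univ]
  have hub : ∑ x : Fin n → Fin q, (Finset.univ.filter fun v => x v = f x v).card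
      ≤ (n - 1) / q * q ^ n := by
    calc _ ≤ ∑ _x : Fin n → Fin q, (n - 1) / q := by
            refine Finset.sum_le_sum (fun x _ => ?_)
            have h3 := hcon x
            rw [hk] at h3
            exact Nat.lt_succ_iff.mp h3
      _ = (n - 1) / q * q ^ n := by
            simp [Finset.sum_const, Finset.card_univ, Fintype.card_fun, mul_comm]
  rw [htot] at hub
  have hqn : q ^ n = q * q ^ (n - 1) := by
    rw [← pow_succ', Nat.sub_add_cancel hn1]
  rw [hqn, ← mul_assoc] at hub
  have hpow : 0 < q ^ (n - 1) := pow_pos hq0 _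
  have hle : n ≤ (n - 1) / q * q := Nat.le_of_mul_le_mul_right hub hpow
  have hle2 : (n - 1) / q * q ≤ n - 1 := Nat.div_mul_le_self _ _
  exact absurd (le_trans hle hle2) (Nat.not_le.mpr (Nat.sub_lt hn1 Nat.one_pos))

/-- i(K_n, q) = n - ⌈n/q⌉ for n ≥ q ≥ 2. -/
theorem stmt6 (n q : ℕ) (hq : 2 ≤ q) (hn : q ≤ n) :
    (∃ f : (Fin n → Fin q) → (Fin n → Fin q),
      (∀ v (x y : Fin n → Fin q), (∀ u, u ≠ v → x u = y u) → f x v = f y v) ∧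
      ∀ x, n - (n + q - 1) / q ≤ hammingDist x (f x)) ∧
    (∀ f : (Fin n → Fin q) → (Fin n → Fin q),
      (∀ v (x y : Fin n → Fin q), (∀ u, u ≠ v → x u = y u) → f x v = f y v) →
      ∃ x, hammingDist x (f x) ≤ n - (n + q - 1) / q) := by
  haveI : NeZero q := ⟨by omega⟩
  have hn1 : 1 ≤ n := by omega
  have hpart : ∀ (g : (Fin n → Fin q) → Fin n → Fin q) (x : Fin n → Fin q),
      (Finset.univ.filter fun v => x v = g x v).card + hammingDist x (g x) = n := by
    intro g x
    have := Finset.card_filter_add_card_filter_not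
      (s := (Finset.univ : Finset (Fin n))) (p := fun v => x v = g x v)
    simpa [hammingDist, Finset.card_univ, Ne] using this
  constructor
  · refine ⟨myF n q, fun v x y h => myF_local n q v x y h, fun x => ?_⟩
    have h1 := myF_card_le n q hn1 x
    have h2 := hpart (myF n q) x
    generalize hkk : (n + q - 1) / q = k at h1 ⊢
    omega
  · intro f hf
    obtain ⟨x, hx⟩ := exists_many n q hq hn f hf
    refine ⟨x, ?_⟩
    have h2 := hpart f x
    generalize hkk : (n + q - 1) / q = k at hx ⊢
    omega
end

section
/- For any loopless digraph D on n vertices and any q ≥ 2, s(D,q) + i(D,q) ≤ n, where s(D,q) is the q-stability and i(D,q) is the q-instability of D. -/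
section Aux

variable {n q : ℕ} {D : Fin n → Fin n → Prop}

lemma coord_indep (hD : ∀ v, ¬ D v v)
    {f : (Fin n → Fin q) → (Fin n → Fin q)} (hf : inF D f) (v : Fin n)
    {x y : Fin n → Fin q} (hxy : ∀ w, w ≠ v → x w = y w) : f x v = f y v := by
  by_contra h
  exact hD v (hf v v ⟨x, y, hxy, h⟩)

lemma count_eq (hD : ∀ v, ¬ D v v)
    {f g : (Fin n → Fin q) → (Fin n → Fin q)} (hf : inF D f) (hg : inF D g) (v : Fin n) :
    (Finset.univ.filter (fun x : Fin n → Fin q => f x v = x v)).card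
      = (Finset.univ.filter (fun x : Fin n → Fin q => g x v = x v)).card := by
  apply Finset.card_bij (fun x _ => Function.update x v (g x v))
  · intro x hx
    simp only [Finset.mem_filter, Finset.mem_univ, true_and] at *
    have h1 : g (Function.update x v (g x v)) v = g x v := by
      apply coord_indep hD hg v
      intro w hw
      simp [Function.update_of_ne hw]
    simp [h1]
  · intro x hx x' hx' hee
    simp only [Finset.mem_filter, Finset.mem_univ, true_and] at hx hx'
    funext w
    by_cases hw : w = v
    · subst hw
      have h1 : f x w = f x' w := by
        apply coord_indep hD hf w
        intro u hu
        have := congrFun hee u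
        simpa [Function.update_of_ne hu] using this
      rw [← hx, ← hx', h1]
    · have := congrFun hee w
      simpa [Function.update_of_ne hw] using this
  · intro y hy
    simp only [Finset.mem_filter, Finset.mem_univ, true_and] at hy
    refine ⟨Function.update y v (f y v), ?_, ?_⟩
    · simp only [Finset.mem_filter, Finset.mem_univ, true_and]
      have h1 : f (Function.update y v (f y v)) v = f y v := by
        apply coord_indep hD hf v
        intro w hw
        simp [Function.update_of_ne hw]
      simp [h1]
    · have h2 : g (Function.update y v (f y v)) v = g y v := by
        apply coord_indep hD hg v
        intro w hw
        simp [Function.update_of_ne hw]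
      rw [h2, hy]
      funext w
      by_cases hw : w = v
      · subst hw; simp
      · simp [Function.update_of_ne hw]

lemma sum_fix_eq (hD : ∀ v, ¬ D v v)
    {f g : (Fin n → Fin q) → (Fin n → Fin q)} (hf : inF D f) (hg : inF D g) :
    ∑ x : Fin n → Fin q, (Finset.univ.filter (fun v => f x v = x v)).card
      = ∑ x : Fin n → Fin q, (Finset.univ.filter (fun v => g x v = x v)).card := by
  have key : ∀ (h : (Fin n → Fin q) → (Fin n → Fin q)),
      ∑ x : Fin n → Fin q, (Finset.univ.filter (fun v => h x v = x v)).card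
        = ∑ v : Fin n, (Finset.univ.filter (fun x : Fin n → Fin q => h x v = x v)).card := by
    intro h
    simp only [Finset.card_filter]
    exact Finset.sum_comm
  rw [key f, key g]
  exact Finset.sum_congr rfl fun v _ => count_eq hD hf hg v

lemma exists_fix_le (hq : 2 ≤ q) (hD : ∀ v, ¬ D v v)
    {f g : (Fin n → Fin q) → (Fin n → Fin q)} (hf : inF D f) (hg : inF D g) :
    ∃ x : Fin n → Fin q, (Finset.univ.filter (fun v => f x v = x v)).card
      ≤ (Finset.univ.filter (fun v => g x v = x v)).card := by
  have : Nonempty (Fin q) := ⟨⟨0, by omega⟩⟩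
  have hne : (Finset.univ : Finset (Fin n → Fin q)).Nonempty := Finset.univ_nonempty
  obtain ⟨x, _, hx⟩ := Finset.exists_le_of_sum_le hne (le_of_eq (sum_fix_eq hD hf hg))
  exact ⟨x, hx⟩

end Aux


/-- s(D,q) + i(D,q) ≤ n. -/
theorem stmt10 (n q : ℕ) (hq : 2 ≤ q) (D : Fin n → Fin n → Prop)
    (hD : ∀ v, ¬ D v v) :
    stab D q + instab D q ≤ n := by
  have hA : Nonempty (Fin q) := ⟨⟨0, by omega⟩⟩
  have hx0 : Nonempty (Fin n → Fin q) := inferInstance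
  obtain ⟨x0⟩ := hx0
  set S₁ := {m | ∃ f : (Fin n → Fin q) → (Fin n → Fin q), inF D f ∧
    ∀ x, m ≤ (Finset.univ.filter (fun v => f x v = x v)).card} with hS₁
  set S₂ := {m | ∃ f : (Fin n → Fin q) → (Fin n → Fin q), inF D f ∧
    ∀ x, m ≤ hammingDist x (f x)} with hS₂
  have hconst : inF D (fun _ : Fin n → Fin q => fun _ => Classical.arbitrary (Fin q)) := by
    rintro u v ⟨x, y, _, hne⟩
    exact absurd rfl hne
  have h1ne : S₁.Nonempty := ⟨0, _, hconst, fun x => Nat.zero_le _⟩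
  have h2ne : S₂.Nonempty := ⟨0, _, hconst, fun x => Nat.zero_le _⟩
  have h1bdd : BddAbove S₁ := by
    refine ⟨n, ?_⟩
    rintro m ⟨f, _, hm⟩
    calc m ≤ (Finset.univ.filter (fun v => f x0 v = x0 v)).card := hm x0
      _ ≤ (Finset.univ : Finset (Fin n)).card := Finset.card_filter_le _ _
      _ = n := by simp
  have h2bdd : BddAbove S₂ := by
    refine ⟨n, ?_⟩
    rintro m ⟨f, _, hm⟩
    calc m ≤ hammingDist x0 (f x0) := hm x0
      _ ≤ (Finset.univ : Finset (Fin n)).card := Finset.card_filter_le _ _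
      _ = n := by simp
  obtain ⟨f, hf, hfs⟩ : stab D q ∈ S₁ := Nat.sSup_mem h1ne h1bdd
  obtain ⟨g, hg, hgs⟩ : instab D q ∈ S₂ := Nat.sSup_mem h2ne h2bdd
  obtain ⟨x, hx⟩ := exists_fix_le hq hD hf hg
  have hsplit : hammingDist x (g x) + (Finset.univ.filter (fun v => g x v = x v)).card = n := by
    have h := Finset.card_filter_add_card_filter_not
      (s := (Finset.univ : Finset (Fin n))) (p := fun v => x v ≠ g x v)
    have h2 : (Finset.univ.filter (fun v => ¬ x v ≠ g x v)) =
        (Finset.univ.filter (fun v => g x v = x v)) := by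
      ext v; simp [eq_comm]
    have h3 : hammingDist x (g x) = (Finset.univ.filter (fun v => x v ≠ g x v)).card := rfl
    rw [h3, ← h2]
    simpa using h
  calc stab D q + instab D q
      ≤ (Finset.univ.filter (fun v => g x v = x v)).card + hammingDist x (g x) :=
        Nat.add_le_add (le_trans (hfs x) hx) (hgs x)
    _ = n := by omega
end

section
/- Let D be an undirected graph on n vertices with maximum degree Δ, viewed as a bidirected digraph, and let q = 2^Δ. Then the q-instability of D equals τ(D): there exists f : (Fin q)^n → (Fin q)^n with interaction graph a subgraph of D such that for every x ∈ (Fin q)^n, the set {v : f_v(x) = x_v} is an independent set of D (hence d_H(x, f(x)) ≥ τ(D), since the complement of an independent set is a feedback vertex set when D is symmetric). -/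
open scoped Classical in
private lemma localEq {n : ℕ} {A : Type} (g : (Fin n → A) → A) (S : Fin n → Prop)
    (h : ∀ u, ¬ S u → ∀ a b : Fin n → A, (∀ w, w ≠ u → a w = b w) → g a = g b) :
    ∀ (k : ℕ) (x y : Fin n → A),
      (Finset.univ.filter (fun u => x u ≠ y u)).card ≤ k →
      (∀ u, S u → x u = y u) → g x = g y := by
  classical
  intro k
  induction k with
  | zero =>
    intro x y hc hS
    have hxy : x = y := by
      funext u
      by_contra hne
      have hmem : u ∈ Finset.univ.filter (fun u => x u ≠ y u) := by simp [hne]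
      have := Finset.card_pos.mpr ⟨u, hmem⟩
      omega
    rw [hxy]
  | succ k ih =>
    intro x y hc hS
    by_cases hxy : x = y
    · rw [hxy]
    · obtain ⟨u, hu⟩ : ∃ u, x u ≠ y u := by
        by_contra hcon; push_neg at hcon; exact hxy (funext hcon)
      have hSu : ¬ S u := fun hs => hu (hS u hs)
      have h1 : g x = g (Function.update x u (y u)) :=
        h u hSu x _ (fun w hw => (Function.update_of_ne hw _ _).symm)
      have hsub : Finset.univ.filter (fun w => Function.update x u (y u) w ≠ y w) ⊆
          (Finset.univ.filter (fun w => x w ≠ y w)).erase u := by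
        intro w hw
        simp only [Finset.mem_filter, Finset.mem_univ, true_and] at hw
        rcases eq_or_ne w u with rfl | hwu
        · exact absurd (Function.update_self _ _ _) hw
        · simp only [Finset.mem_erase, Finset.mem_filter, Finset.mem_univ, true_and]
          exact ⟨hwu, by rwa [Function.update_of_ne hwu] at hw⟩
      have hmem : u ∈ Finset.univ.filter (fun w => x w ≠ y w) := by simp [hu]
      have hcard : (Finset.univ.filter
          (fun w => Function.update x u (y u) w ≠ y w)).card ≤ k := by
        have h2 := Finset.card_le_card hsub
        have h3 := Finset.card_erase_of_mem hmem
        omega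
      have hS' : ∀ w, S w → Function.update x u (y u) w = y w := by
        intro w hw
        rcases eq_or_ne w u with rfl | hwu
        · exact Function.update_self _ _ _
        · rw [Function.update_of_ne hwu]; exact hS w hw
      rw [h1]; exact ih _ y hcard hS'

private lemma inF_local {n q : ℕ} {D : Fin n → Fin n → Prop}
    {f : (Fin n → Fin q) → Fin n → Fin q} (hf : inF D f) (v : Fin n)
    (x y : Fin n → Fin q) (hxy : ∀ u, D u v → x u = y u) : f x v = f y v := by
  classical
  refine localEq (fun z => f z v) (fun u => D u v) ?_
    n x y ((Finset.card_le_univ _).trans (by simp)) hxy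
  intro u hu a b hab
  by_contra hne
  exact hu (hf u v ⟨a, b, hab, hne⟩)

open scoped Classical in
private lemma hamming_eq {n q : ℕ} (x y : Fin n → Fin q) :
    hammingDist x y = (Finset.univ.filter (fun v => x v ≠ y v)).card := by
  rw [hammingDist]

open scoped Classical in
/-- for an undirected graph D with max degree Δ and q = 2^Δ,
there is f ∈ F(D,q) whose agreement set is always independent, and i(D,q) = τ(D). -/
theorem stmt11 (n : ℕ) (D : Fin n → Fin n → Prop)
    (hsymm : ∀ u v, D u v → D v u) (hD : ∀ v, ¬ D v v)
    (Δ : ℕ)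
    (hΔ : Δ = Finset.univ.sup (fun v : Fin n =>
      (Finset.univ.filter (fun u => D u v)).card)) :
    (∃ f : (Fin n → Fin (2 ^ Δ)) → (Fin n → Fin (2 ^ Δ)), inF D f ∧
      ∀ x u v, f x u = x u → f x v = x v → ¬ D u v) ∧
    instab D (2 ^ Δ) = tau D := by
  classical
  -- degrees
  have hdeg : ∀ v : Fin n, (Finset.univ.filter (fun u => D u v)).card ≤ Δ := by
    intro v
    rw [hΔ]
    exact Finset.le_sup (f := fun v => (Finset.univ.filter (fun u => D u v)).card)
      (Finset.mem_univ v)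
  -- embeddings of neighbourhoods into Fin Δ
  have hembn : ∀ v : Fin n,
      Nonempty ((Finset.univ.filter (fun u => D u v) : Finset (Fin n)) ↪ Fin Δ) := by
    intro v
    rw [Function.Embedding.nonempty_iff_card_le, Fintype.card_coe, Fintype.card_fin]
    exact hdeg v
  -- ports
  let P : ∀ v u : Fin n, D u v → Fin Δ := fun v u h =>
    (hembn v).some ⟨u, Finset.mem_filter.mpr ⟨Finset.mem_univ u, h⟩⟩
  let e : (Fin Δ → Fin 2) ≃ Fin (2 ^ Δ) := finFunctionFinEquiv
  -- current bit of vertex v for its neighbour u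
  let B : (Fin n → Fin (2 ^ Δ)) → ∀ v u : Fin n, D u v → Fin 2 := fun x v u h =>
    e.symm (x v) (P v u h)
  -- the new bit that f_v writes at port (P v u h)
  let val : (Fin n → Fin (2 ^ Δ)) → ∀ v u : Fin n, D u v → Fin 2 := fun x v u h =>
    if u < v then B x u v (hsymm u v h) else 1 - B x u v (hsymm u v h)
  let f : (Fin n → Fin (2 ^ Δ)) → (Fin n → Fin (2 ^ Δ)) := fun x v =>
    e (fun i => if h : ∃ p : {u : Fin n // D u v}, P v p.1 p.2 = i then
        val x v h.choose.1 h.choose.2 else 0)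
  -- extraction lemma
  have hext : ∀ (x : Fin n → Fin (2 ^ Δ)) (v u : Fin n) (hu : D u v),
      e.symm (f x v) (P v u hu) = val x v u hu := by
    intro x v u hu
    have hcond : ∃ p : {u' : Fin n // D u' v}, P v p.1 p.2 = P v u hu := ⟨⟨u, hu⟩, rfl⟩
    simp only [f, Equiv.symm_apply_apply, dif_pos hcond]
    have hspec := hcond.choose_spec
    have hinj : (⟨hcond.choose.1, Finset.mem_filter.mpr ⟨Finset.mem_univ _, hcond.choose.2⟩⟩ :
        (Finset.univ.filter (fun u => D u v) : Finset (Fin n))) =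
        ⟨u, Finset.mem_filter.mpr ⟨Finset.mem_univ u, hu⟩⟩ :=
      (hembn v).some.injective hspec
    have h1 : hcond.choose.1 = u := congrArg Subtype.val hinj
    have h2 : hcond.choose = ⟨u, hu⟩ := Subtype.ext h1
    rw [h2]
  -- f depends on x only through neighbours
  have hinF : inF D f := by
    intro u v hdep
    by_contra hnD
    obtain ⟨a, b, hab, hne⟩ := hdep
    apply hne
    show f a v = f b v
    simp only [f]
    congr 1
    funext i
    by_cases hcond : ∃ p : {u' : Fin n // D u' v}, P v p.1 p.2 = i
    · rw [dif_pos hcond, dif_pos hcond]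
      have hD1 : D hcond.choose.1 v := hcond.choose.2
      have hneq : hcond.choose.1 ≠ u := fun h => hnD (h ▸ hD1)
      have hxab : a hcond.choose.1 = b hcond.choose.1 := hab _ hneq
      simp only [val, B, hxab]
    · rw [dif_neg hcond, dif_neg hcond]
  -- the agreement set is independent
  have hind : ∀ (x : Fin n → Fin (2 ^ Δ)) (u v : Fin n),
      f x u = x u → f x v = x v → ¬ D u v := by
    intro x u v hu hv hD'
    have hD'' : D v u := hsymm u v hD'
    have huv : u ≠ v := fun h => hD v (h ▸ hD')
    have e1 : e.symm (x v) (P v u hD') = val x v u hD' := by rw [← hv]; exact hext x v u hD'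
    have e2 : e.symm (x u) (P u v hD'') = val x u v hD'' := by rw [← hu]; exact hext x u v hD''
    have hcontra : ∀ c : Fin 2, c ≠ 1 - c := by decide
    rcases lt_or_gt_of_ne huv with hlt | hlt
    · rw [show val x v u hD' = B x u v (hsymm u v hD') from if_pos hlt] at e1
      rw [show val x u v hD'' = 1 - B x v u (hsymm v u hD'') from if_neg (by
        intro h; exact absurd hlt (not_lt.mpr h.le))] at e2
      have k1 : B x v u hD' = B x u v (hsymm u v hD') := e1
      have k2 : B x u v (hsymm u v hD') = 1 - B x v u hD' := e2
      exact hcontra _ (k1 ▸ k2)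
    · rw [show val x v u hD' = 1 - B x u v (hsymm u v hD') from if_neg (by
        intro h; exact absurd hlt (not_lt.mpr h.le))] at e1
      rw [show val x u v hD'' = B x v u (hsymm v u hD'') from if_pos hlt] at e2
      have k1 : B x v u hD' = 1 - B x u v (hsymm u v hD') := e1
      have k2 : B x u v (hsymm u v hD') = B x v u hD' := e2
      exact hcontra _ (k2 ▸ k1)
  refine ⟨⟨f, hinF, hind⟩, ?_⟩
  -- τ belongs to the instability set, via f
  have htmem : tau D ∈ {m | ∃ g : (Fin n → Fin (2 ^ Δ)) → (Fin n → Fin (2 ^ Δ)),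
      inF D g ∧ ∀ x, m ≤ hammingDist x (g x)} := by
    refine ⟨f, hinF, ?_⟩
    intro x
    have hFVS : isFVS D (Finset.univ.filter (fun v => x v ≠ f x v)) := by
      intro v hv
      have hedge : ∃ a b, D a b ∧ a ∉ Finset.univ.filter (fun w => x w ≠ f x w) ∧
          b ∉ Finset.univ.filter (fun w => x w ≠ f x w) := by
        cases hv with
        | single h => exact ⟨_, _, h⟩
        | tail _ h => exact ⟨_, _, h⟩
      obtain ⟨a, b, hab, ha, hb⟩ := hedge
      simp only [Finset.mem_filter, Finset.mem_univ, true_and, not_not] at ha hb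
      exact hind x a b ha.symm hb.symm hab
    calc tau D ≤ (Finset.univ.filter (fun v => x v ≠ f x v)).card :=
          Nat.sInf_le ⟨_, hFVS, rfl⟩
      _ = hammingDist x (f x) := (hamming_eq _ _).symm
  -- every element of the set is at most τ
  have hub : ∀ m ∈ {m | ∃ g : (Fin n → Fin (2 ^ Δ)) → (Fin n → Fin (2 ^ Δ)),
      inF D g ∧ ∀ x, m ≤ hammingDist x (g x)}, m ≤ tau D := by
    rintro m ⟨g, hg, hgd⟩
    have hne : {k | ∃ I : Finset (Fin n), isFVS D I ∧ I.card = k}.Nonempty := by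
      refine ⟨(Finset.univ : Finset (Fin n)).card, Finset.univ, ?_, rfl⟩
      intro v hv
      have hedge : ∃ a b : Fin n, D a b ∧ a ∉ (Finset.univ : Finset (Fin n)) ∧
          b ∉ (Finset.univ : Finset (Fin n)) := by
        cases hv with
        | single h => exact ⟨_, _, h⟩
        | tail _ h => exact ⟨_, _, h⟩
      obtain ⟨a, b, _, ha, _⟩ := hedge
      exact ha (Finset.mem_univ a)
    obtain ⟨I, hIfvs, hIcard⟩ := Nat.sInf_mem hne
    set R : Fin n → Fin n → Prop := fun a b => D a b ∧ a ∉ I ∧ b ∉ I with hR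
    haveI : IsTrans (Fin n) (Relation.TransGen R) := ⟨fun _ _ _ => Relation.TransGen.trans⟩
    haveI : IsIrrefl (Fin n) (Relation.TransGen R) := ⟨hIfvs⟩
    have hwfT := Finite.wellFounded_of_trans_of_irrefl (Relation.TransGen R)
    have hwf : WellFounded R := Subrelation.wf (fun h => Relation.TransGen.single h) hwfT
    have hq : 0 < 2 ^ Δ := by positivity
    set d : Fin (2 ^ Δ) := ⟨0, hq⟩ with hd
    set x : Fin n → Fin (2 ^ Δ) := hwf.fix (fun v ih =>
      if v ∈ I then d else g (fun u => if h : R u v then ih u h else d) v) with hxdef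
    have hx : ∀ v, x v = if v ∈ I then d
        else g (fun u => if h : R u v then x u else d) v := by
      intro v
      conv_lhs => rw [hxdef]
      rw [WellFounded.fix_eq]
    have hfix : ∀ v ∉ I, g x v = x v := by
      intro v hv
      rw [hx v, if_neg hv]
      refine inF_local hg v x _ ?_
      intro u hu
      by_cases hui : u ∈ I
      · rw [dif_neg (show ¬ R u v from fun h => h.2.1 hui), hx u, if_pos hui]
      · rw [dif_pos (show R u v from ⟨hu, hui, hv⟩)]
    have hsub : Finset.univ.filter (fun v => x v ≠ g x v) ⊆ I := by
      intro v hv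
      simp only [Finset.mem_filter, Finset.mem_univ, true_and] at hv
      by_contra hvI
      exact hv (hfix v hvI).symm
    calc m ≤ hammingDist x (g x) := hgd x
      _ = (Finset.univ.filter (fun v => x v ≠ g x v)).card := hamming_eq _ _
      _ ≤ I.card := Finset.card_le_card hsub
      _ = tau D := hIcard
  have hbdd : BddAbove {m | ∃ g : (Fin n → Fin (2 ^ Δ)) → (Fin n → Fin (2 ^ Δ)),
      inF D g ∧ ∀ x, m ≤ hammingDist x (g x)} := ⟨tau D, hub⟩
  exact le_antisymm (csSup_le ⟨tau D, htmem⟩ hub) (le_csSup hbdd htmem)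
end

section
/- For any loopless digraph D, the instability satisfies sup_{q ≥ 2} i(D,q) = τ(D); moreover, i(D, 2^{χ'(D)}) = τ(D), where χ'(D) is the chromatic number of the graph whose vertices are the chordless cycles of D with two chordless cycles adjacent iff they share a vertex of D. -/
open Classical in
lemma not_dependsOn_eq {n : ℕ} {A : Type} (fv : (Fin n → A) → A) (u : Fin n)
    (h : ¬ dependsOn fv u) (x y : Fin n → A) (hxy : ∀ w, w ≠ u → x w = y w) :
    fv x = fv y := by
  by_contra hne
  exact h ⟨x, y, hxy, hne⟩

open Classical in
lemma eq_of_agree_on_deps_aux {n : ℕ} {A : Type} (fv : (Fin n → A) → A)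
    (s : Finset (Fin n)) :
    ∀ g z : Fin n → A, (∀ u, g u ≠ z u → u ∈ s) → (∀ u ∈ s, ¬ dependsOn fv u) →
      fv g = fv z := by
  induction s using Finset.induction_on with
  | empty =>
      intro g z hgz _
      have : g = z := funext fun u => by by_contra hne; exact absurd (hgz u hne) (by simp)
      rw [this]
  | @insert a s ha ih =>
      intro g z hgz hdep
      set z' := Function.update z a (g a) with hz'
      have h1 : fv z' = fv z := by
        refine not_dependsOn_eq fv a (hdep a (Finset.mem_insert_self a s)) z' z ?_
        intro w hw; simp [hz', Function.update_of_ne hw]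
      have h2 : fv g = fv z' := by
        refine ih g z' ?_ (fun u hu => hdep u (Finset.mem_insert_of_mem hu))
        intro u hu
        have hua : u ≠ a := by
          intro h; subst h; exact hu (by simp [hz'])
        have : g u ≠ z u := by simpa [hz', Function.update_of_ne hua] using hu
        rcases Finset.mem_insert.mp (hgz u this) with h | h
        · exact absurd h hua
        · exact h
      rw [h2, h1]

open Classical in
lemma eq_of_agree_on_deps {n : ℕ} {A : Type} (fv : (Fin n → A) → A)
    (g z : Fin n → A) (h : ∀ u, dependsOn fv u → g u = z u) : fv g = fv z := by
  refine eq_of_agree_on_deps_aux fv (Finset.univ.filter (fun u => ¬ dependsOn fv u)) g z ?_ ?_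
  · intro u hu
    simp only [Finset.mem_filter, Finset.mem_univ, true_and]
    intro hd; exact hu (h u hd)
  · intro u hu
    simpa using (Finset.mem_filter.mp hu).2

lemma instab_le_tau {n : ℕ} (D : Fin n → Fin n → Prop) (q : ℕ) (hq : 1 ≤ q) :
    instab D q ≤ tau D := by
  classical
  -- tau is attained
  have hne : {k | ∃ I : Finset (Fin n), isFVS D I ∧ I.card = k}.Nonempty := by
    refine ⟨(Finset.univ : Finset (Fin n)).card, Finset.univ, ?_, rfl⟩
    intro v hv
    rcases hv with h | ⟨_, h⟩ <;> exact h.2.1 (Finset.mem_univ _)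
  obtain ⟨I, hI, hIcard⟩ := Nat.sInf_mem hne
  refine csSup_le' ?_
  rintro m ⟨f, hf, hm⟩
  -- build a point g with disagreement only inside I
  set R : Fin n → Fin n → Prop := fun a b => D a b ∧ a ∉ I ∧ b ∉ I with hR
  have hirr : IsIrrefl (Fin n) (Relation.TransGen R) := ⟨fun v h => hI v h⟩
  have htr : IsTrans (Fin n) (Relation.TransGen R) := ⟨fun _ _ _ => Relation.TransGen.trans⟩
  have hwfT : WellFounded (Relation.TransGen R) :=
    Finite.wellFounded_of_trans_of_irrefl _
  have hwf : WellFounded R := Subrelation.wf (fun h => Relation.TransGen.single h) hwfT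
  have a0 : Fin q := ⟨0, by omega⟩
  set g : Fin n → Fin q := hwf.fix (fun v ih =>
    if v ∈ I then a0 else f (fun u => if h : R u v then ih u h else a0) v) with hg
  have hgeq : ∀ v, g v = if v ∈ I then a0
      else f (fun u => if R u v then g u else a0) v := by
    intro v
    rw [hg, WellFounded.fix_eq]
    simp only []
    congr 1
  have key : ∀ v, v ∉ I → f g v = g v := by
    intro v hv
    set z : Fin n → Fin q := fun u => if R u v then g u else a0 with hz
    have h1 : g v = f z v := by rw [hgeq v, if_neg hv]
    have h2 : f g v = f z v := by
      refine eq_of_agree_on_deps (fun x => f x v) g z ?_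
      intro u hu
      have hDuv : D u v := hf u v hu
      by_cases huI : u ∈ I
      · have hzu : z u = a0 := by
          rw [hz]; simp only []
          rw [if_neg]; rintro ⟨_, h, _⟩; exact h huI
        have hgu : g u = a0 := by rw [hgeq u, if_pos huI]
        rw [hzu, hgu]
      · have : R u v := ⟨hDuv, huI, hv⟩
        rw [hz]; simp only []; rw [if_pos this]
    rw [h2, ← h1]
  have hsub : (Finset.univ.filter (fun v => g v ≠ f g v)) ⊆ I := by
    intro v hv
    simp only [Finset.mem_filter] at hv
    by_contra hvI
    exact hv.2 (key v hvI).symm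
  calc m ≤ hammingDist g (f g) := hm g
    _ ≤ I.card := by
        unfold hammingDist
        exact Finset.card_le_card hsub
    _ = tau D := hIcard


lemma zmod_succ_val {s : ℕ} [NeZero s] (t : ZMod s) (h : t.val + 1 < s) :
    (t + 1).val = t.val + 1 := by
  have h1 : t + 1 = ((t.val + 1 : ℕ) : ZMod s) := by
    rw [Nat.cast_add, Nat.cast_one, ZMod.natCast_rightInverse t]
  rw [h1, ZMod.val_cast_of_lt h]

lemma zmod_succ_zero {s : ℕ} [NeZero s] (t : ZMod s) (h : t.val + 1 = s) :
    t + 1 = 0 := by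
  have h1 : t + 1 = ((t.val + 1 : ℕ) : ZMod s) := by
    rw [Nat.cast_add, Nat.cast_one, ZMod.natCast_rightInverse t]
  rw [h1, h, ZMod.natCast_self]

lemma exists_chordless_of_walk {n : ℕ} (D : Fin n → Fin n → Prop) (hD : ∀ v, ¬ D v v)
    (Δ : Set (Fin n))
    (m1 : ℕ) (h1 : 1 ≤ m1) (c1 : ZMod m1 → Fin n)
    (hw : ∀ i, D (c1 i) (c1 (i + 1)) ∧ c1 i ∉ Δ) :
    ∃ S : Finset (Fin n), isChordlessCycle D S ∧ ∀ w ∈ S, w ∉ Δ := by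
  classical
  set r : Fin n → Fin n → Prop := fun a b => D a b ∧ a ∉ Δ ∧ b ∉ Δ with hr
  set W : Set ℕ := {m | 1 ≤ m ∧ ∃ c : ZMod m → Fin n, ∀ i, r (c i) (c (i + 1))} with hW
  have hWne : W.Nonempty := by
    refine ⟨m1, h1, c1, fun i => ⟨(hw i).1, (hw i).2, ?_⟩⟩
    exact (hw (i + 1)).2
  set m0 : ℕ := sInf W with hm0def
  obtain ⟨hm0, c, hc⟩ : m0 ∈ W := Nat.sInf_mem hWne
  haveI : NeZero m0 := ⟨by omega⟩
  have hmin : ∀ s ∈ W, m0 ≤ s := fun s hs => Nat.sInf_le hs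
  have hnotΔ : ∀ i, c i ∉ Δ := fun i => (hc i).2.1
  -- injectivity
  have hinj : Function.Injective c := by
    intro i j hij
    by_contra hne
    have hsne : j - i ≠ 0 := sub_ne_zero.mpr (Ne.symm hne)
    have hs1 : 1 ≤ (j - i).val := by
      have := (ZMod.val_eq_zero (j - i)).not.mpr hsne
      omega
    have hslt : (j - i).val < m0 := ZMod.val_lt _
    haveI : NeZero ((j - i).val) := ⟨by omega⟩
    have hsW : (j - i).val ∈ W := by
      refine ⟨hs1, fun t => c (i + ((t.val : ℕ) : ZMod m0)), fun t => ?_⟩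
      show r (c (i + ((t.val : ℕ) : ZMod m0))) (c (i + (((t + 1).val : ℕ) : ZMod m0)))
      by_cases hcase : t.val + 1 < (j - i).val
      · rw [zmod_succ_val t hcase, Nat.cast_add, Nat.cast_one, ← add_assoc]
        exact hc _
      · have hts : t.val + 1 = (j - i).val := by have := ZMod.val_lt t; omega
        have h3 : i + ((t.val : ℕ) : ZMod m0) + 1 = j := by
          have h4 : (((j - i).val : ℕ) : ZMod m0) = j - i := ZMod.natCast_rightInverse _
          have h5 : ((t.val + 1 : ℕ) : ZMod m0) = j - i := by rw [hts, h4]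
          push_cast at h5
          rw [add_assoc, h5]
          ring
        rw [zmod_succ_zero t hts, ZMod.val_zero, Nat.cast_zero, add_zero, hij]
        have h9 := hc (i + ((t.val : ℕ) : ZMod m0))
        rw [h3] at h9
        exact h9
    have := hmin _ hsW
    omega
  -- chordlessness
  have hchordless : ∀ i j, D (c i) (c j) → j = i + 1 := by
    intro i j hDij
    by_contra hne
    have hij : i ≠ j := by rintro rfl; exact hD _ hDij
    have hsub : i - j ≠ 0 := sub_ne_zero.mpr hij
    have hv1 : 1 ≤ (i - j).val := by
      have := (ZMod.val_eq_zero (i - j)).not.mpr hsub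
      omega
    have hvlt : (i - j).val < m0 := ZMod.val_lt _
    have hvne : (i - j).val ≠ m0 - 1 := by
      intro hv
      apply hne
      have h6 : i - j = ((m0 - 1 : ℕ) : ZMod m0) := by
        rw [← hv, ZMod.natCast_rightInverse]
      have h7 : ((m0 - 1 : ℕ) : ZMod m0) = -1 := by
        have h8 : ((m0 : ℕ) : ZMod m0) = 0 := ZMod.natCast_self m0
        rw [Nat.cast_sub (by omega), h8, Nat.cast_one]
        ring
      rw [h7] at h6
      linear_combination -h6
    set s : ℕ := (i - j).val + 1 with hs
    have hslt : s < m0 := by omega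
    haveI : NeZero s := ⟨by omega⟩
    have hsW : s ∈ W := by
      refine ⟨by omega, fun t => c (j + ((t.val : ℕ) : ZMod m0)), fun t => ?_⟩
      show r (c (j + ((t.val : ℕ) : ZMod m0))) (c (j + (((t + 1).val : ℕ) : ZMod m0)))
      by_cases hcase : t.val + 1 < s
      · rw [zmod_succ_val t hcase, Nat.cast_add, Nat.cast_one, ← add_assoc]
        exact hc _
      · have hts : t.val + 1 = s := by have := ZMod.val_lt t; omega
        have h3 : j + ((t.val : ℕ) : ZMod m0) = i := by
          have htv : t.val = (i - j).val := by omega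
          rw [htv, ZMod.natCast_rightInverse]
          ring
        rw [zmod_succ_zero t hts, ZMod.val_zero, Nat.cast_zero, add_zero, h3]
        exact ⟨hDij, hnotΔ i, hnotΔ j⟩
    have := hmin _ hsW
    omega
  refine ⟨Finset.image c Finset.univ,
    ⟨m0, by omega, c, hinj, ?_, fun i => (hc i).1, hchordless⟩, ?_⟩
  · simp
  · intro w hw'
    simp only [Finset.mem_image, Finset.mem_univ, true_and] at hw'
    obtain ⟨i, rfl⟩ := hw'
    exact hnotΔ i

lemma walk_of_transGen {α : Type} {r : α → α → Prop} {v : α}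
    (h : Relation.TransGen r v v) :
    ∃ m : ℕ, 1 ≤ m ∧ ∃ c : ZMod m → α, ∀ i, r (c i) (c (i + 1)) := by
  obtain ⟨w, hvw, hwv⟩ := Relation.TransGen.head'_iff.mp h
  obtain ⟨l, hchain, hlast⟩ := List.exists_isChain_cons_of_relationReflTransGen hwv
  set L : List α := v :: w :: l with hL
  have hchain' : List.Chain' r L := List.IsChain.cons_cons hvw hchain
  set m : ℕ := (w :: l).length with hm
  have hm1 : 1 ≤ m := by simp [hm]
  haveI : NeZero m := ⟨by omega⟩
  have hLlen : L.length = m + 1 := by simp [hL, hm]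
  have hget : ∀ (i : ℕ) (h : i + 1 < L.length), r (L.get ⟨i, by omega⟩) (L.get ⟨i + 1, h⟩) :=
    List.isChain_iff_getElem.mp hchain'
  have hL0 : L.get ⟨0, by omega⟩ = v := rfl
  have hLm : L.get ⟨m, by omega⟩ = v := by
    have h2 : L.getLast (by simp [hL]) = v := by
      show (v :: w :: l).getLast (by simp) = v
      rw [List.getLast_cons (by simp : (w :: l) ≠ [])]
      exact hlast
    rw [List.getLast_eq_getElem] at h2
    simpa [hLlen] using h2
  refine ⟨m, hm1, fun i => L.get ⟨i.val, by have := ZMod.val_lt i; omega⟩, fun i => ?_⟩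
  by_cases hcase : i.val + 1 < m
  · have hv : (i + 1).val = i.val + 1 := zmod_succ_val i hcase
    have := hget i.val (by omega)
    simp only [hv]
    convert this using 3
  · have hts : i.val + 1 = m := by have := ZMod.val_lt i; omega
    have h2 : (i + 1) = 0 := zmod_succ_zero i hts
    have h3 := hget i.val (by omega)
    simp only [h2, ZMod.val_zero]
    have h4 : L.get ⟨i.val + 1, by omega⟩ = L.get ⟨0, by omega⟩ := by
      rw [hL0]
      convert hLm using 2
      exact Fin.mk_eq_mk.mpr hts
    rw [← h4]
    convert h3 using 3

lemma bool_cycle_contradiction {m : ℕ} (hm : 1 ≤ m) (φ : ZMod m → Bool)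
    (h : ∀ j, φ j = xor (φ (j - 1)) (decide (j = 0))) : False := by
  haveI : NeZero m := ⟨by omega⟩
  have key : ∀ jn : ℕ, jn < m → φ ((jn : ℕ) : ZMod m) = φ 0 := by
    intro jn
    induction jn with
    | zero => simp
    | succ p ih =>
        intro hlt
        have hne : (((p + 1 : ℕ) : ZMod m)) ≠ 0 := by
          intro h0
          have := ZMod.val_cast_of_lt hlt
          rw [h0, ZMod.val_zero] at this
          omega
        have heq := h (((p + 1 : ℕ) : ZMod m))
        rw [decide_eq_false hne, Bool.xor_false] at heq
        have hsub : (((p + 1 : ℕ) : ZMod m)) - 1 = ((p : ℕ) : ZMod m) := by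
          push_cast; ring
        rw [hsub] at heq
        rw [heq]
        exact ih (by omega)
  have h0 := h 0
  rw [decide_eq_true rfl, Bool.xor_true] at h0
  have hm1 : ((m - 1 : ℕ) : ZMod m) = 0 - 1 := by
    rw [Nat.cast_sub (by omega : 1 ≤ m), ZMod.natCast_self, Nat.cast_one]
  have hk := key (m - 1) (by omega)
  rw [hm1] at hk
  rw [hk] at h0
  simp at h0

lemma construction {n k : ℕ} (D : Fin n → Fin n → Prop)
    (col : {S : Finset (Fin n) // isChordlessCycle D S} → Fin k)
    (hcol : ∀ S T, S.1 ≠ T.1 → (S.1 ∩ T.1).Nonempty → col S ≠ col T) :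
    ∃ f' : (Fin n → (Fin k → Bool)) → Fin n → (Fin k → Bool),
      (∀ u v, dependsOn (fun x => f' x v) u → D u v) ∧
      ∀ (x : Fin n → (Fin k → Bool)) (S' : {S : Finset (Fin n) // isChordlessCycle D S}),
        ∃ v ∈ S'.1, x v ≠ f' x v := by
  classical
  have hdata : ∀ S : {S : Finset (Fin n) // isChordlessCycle D S},
      ∃ (m : ℕ) (c : ZMod m → Fin n), 1 ≤ m ∧ Function.Injective c ∧
        Set.range c = ↑S.1 ∧ (∀ i, D (c i) (c (i + 1))) ∧
        (∀ i j, D (c i) (c j) → j = i + 1) := by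
    intro S
    obtain ⟨m, hm, c, h1, h2, h3, h4⟩ := S.2
    exact ⟨m, c, hm, h1, h2, h3, h4⟩
  choose mS cS hm1 hinj hrange hedge hchord using hdata
  have hex : ∀ (S : {S : Finset (Fin n) // isChordlessCycle D S}) (v : Fin n),
      v ∈ S.1 → ∃ i : ZMod (mS S), cS S i = v := by
    intro S v hv
    have : v ∈ Set.range (cS S) := by rw [hrange S]; exact hv
    exact this
  choose idx hidx using hex
  set f' : (Fin n → (Fin k → Bool)) → Fin n → (Fin k → Bool) := fun x v c =>
    if h : ∃ S : {S : Finset (Fin n) // isChordlessCycle D S}, col S = c ∧ v ∈ S.1 then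
      xor (x (cS h.choose (idx h.choose v h.choose_spec.2 - 1)) c)
        (decide (idx h.choose v h.choose_spec.2 = 0))
    else false
    with hf'
  refine ⟨f', ?_, ?_⟩
  · -- interaction graph
    rintro u v ⟨x, y, hxy, hne⟩
    have : ∃ c, f' x v c ≠ f' y v c := by
      by_contra hcc
      push_neg at hcc
      exact hne (funext hcc)
    obtain ⟨c, hcne⟩ := this
    by_cases h : ∃ S : {S : Finset (Fin n) // isChordlessCycle D S}, col S = c ∧ v ∈ S.1
    · have hfx : f' x v c = xor (x (cS h.choose (idx h.choose v h.choose_spec.2 - 1)) c)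
          (decide (idx h.choose v h.choose_spec.2 = 0)) := by
        simp only [hf']; rw [dif_pos h]
      have hfy : f' y v c = xor (y (cS h.choose (idx h.choose v h.choose_spec.2 - 1)) c)
          (decide (idx h.choose v h.choose_spec.2 = 0)) := by
        simp only [hf']; rw [dif_pos h]
      rw [hfx, hfy] at hcne
      set S := h.choose
      set i := idx S v h.choose_spec.2
      have hxyne : x (cS S (i - 1)) c ≠ y (cS S (i - 1)) c := by
        intro he
        rw [he] at hcne
        exact hcne rfl
      have hp : cS S (i - 1) = u := by
        by_contra hpu
        exact hxyne (congrFun (hxy _ hpu) c)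
      have hDedge := hedge S (i - 1)
      rw [sub_add_cancel, hidx S v h.choose_spec.2, hp] at hDedge
      exact hDedge
    · have hfx : f' x v c = false := by simp only [hf']; rw [dif_neg h]
      have hfy : f' y v c = false := by simp only [hf']; rw [dif_neg h]
      rw [hfx, hfy] at hcne
      exact (hcne rfl).elim
  · -- every chordless cycle contains a disagreement
    intro x S'
    by_contra hcon
    push_neg at hcon
    have hagree : ∀ (v : Fin n), v ∈ S'.1 → ∃ i : ZMod (mS S'), cS S' i = v ∧
        x v (col S') = xor (x (cS S' (i - 1)) (col S')) (decide (i = 0)) := by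
      intro v hv
      have h : ∃ S : {S : Finset (Fin n) // isChordlessCycle D S},
          col S = col S' ∧ v ∈ S.1 := ⟨S', rfl, hv⟩
      have hxv : x v (col S') = f' x v (col S') := congrFun (hcon v hv) (col S')
      have hfx : f' x v (col S') =
          xor (x (cS h.choose (idx h.choose v h.choose_spec.2 - 1)) (col S'))
            (decide (idx h.choose v h.choose_spec.2 = 0)) := by
        simp only [hf']; rw [dif_pos h]
      have hSS : h.choose = S' := by
        by_contra hne
        have hne1 : h.choose.1 ≠ S'.1 := fun hh => hne (Subtype.ext hh)
        exact hcol _ _ hne1 ⟨v, Finset.mem_inter.mpr ⟨h.choose_spec.2, hv⟩⟩ h.choose_spec.1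
      have haux : ∀ (S₀ : {S : Finset (Fin n) // isChordlessCycle D S}) (h0 : v ∈ S₀.1),
          S₀ = S' → ∃ i : ZMod (mS S'), cS S' i = v ∧
            (xor (x (cS S₀ (idx S₀ v h0 - 1)) (col S')) (decide (idx S₀ v h0 = 0)) =
              xor (x (cS S' (i - 1)) (col S')) (decide (i = 0))) := by
        rintro S₀ h0 rfl
        exact ⟨idx S₀ v h0, hidx S₀ v h0, rfl⟩
      obtain ⟨i, hiv, heq⟩ := haux h.choose h.choose_spec.2 hSS
      exact ⟨i, hiv, by rw [hxv, hfx, heq]⟩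
    set φ : ZMod (mS S') → Bool := fun j => x (cS S' j) (col S') with hφ
    have hrec : ∀ j, φ j = xor (φ (j - 1)) (decide (j = 0)) := by
      intro j
      have hv : cS S' j ∈ S'.1 := by
        have : cS S' j ∈ Set.range (cS S') := ⟨j, rfl⟩
        rw [hrange S'] at this
        exact this
      obtain ⟨i, hiv, heq⟩ := hagree (cS S' j) hv
      have hij : i = j := hinj S' hiv
      subst hij
      exact heq
    exact bool_cycle_contradiction (hm1 S') φ hrec


lemma tau_le_instab {n : ℕ} (D : Fin n → Fin n → Prop) (hD : ∀ v, ¬ D v v) :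
    tau D ≤ instab D (2 ^ chromCycles D) := by
  classical
  have hCne : {k | ∃ col : {S : Finset (Fin n) // isChordlessCycle D S} → Fin k,
      ∀ S T, S.1 ≠ T.1 → (S.1 ∩ T.1).Nonempty → col S ≠ col T}.Nonempty := by
    obtain ⟨N, ⟨e⟩⟩ := Finite.exists_equiv_fin {S : Finset (Fin n) // isChordlessCycle D S}
    refine ⟨N, e, fun S T hne _ hc => ?_⟩
    exact hne (congrArg Subtype.val (e.injective hc))
  have hmemC : chromCycles D ∈ {k | ∃ col : {S : Finset (Fin n) // isChordlessCycle D S} → Fin k,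
      ∀ S T, S.1 ≠ T.1 → (S.1 ∩ T.1).Nonempty → col S ≠ col T} := by
    unfold chromCycles
    exact Nat.sInf_mem hCne
  obtain ⟨col, hcol⟩ := hmemC
  obtain ⟨f', hfA, hfB⟩ := construction D col hcol
  have hcard : Fintype.card (Fin (chromCycles D) → Bool) = 2 ^ chromCycles D := by simp
  set e : (Fin (chromCycles D) → Bool) ≃ Fin (2 ^ chromCycles D) :=
    Fintype.equivFinOfCardEq hcard with he
  set g : (Fin n → Fin (2 ^ chromCycles D)) → Fin n → Fin (2 ^ chromCycles D) :=
    fun x v => e (f' (fun u => e.symm (x u)) v) with hg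
  have hham : ∀ x : Fin n → Fin (2 ^ chromCycles D), tau D ≤ hammingDist x (g x) := by
    intro x
    set x' : Fin n → (Fin (chromCycles D) → Bool) := fun u => e.symm (x u) with hx'
    set Δ : Finset (Fin n) := Finset.univ.filter (fun v => x' v ≠ f' x' v) with hΔ
    have hFVS : isFVS D Δ := by
      intro v hv
      obtain ⟨m1, h1, c1, hc1⟩ := walk_of_transGen hv
      obtain ⟨S, hS, hSΔ⟩ := exists_chordless_of_walk D hD {w | w ∈ Δ} m1 h1 c1
        (fun i => ⟨(hc1 i).1, (hc1 i).2.1⟩)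
      obtain ⟨w, hwS, hwne⟩ := hfB x' ⟨S, hS⟩
      have hnΔ : w ∉ Δ := hSΔ w hwS
      rw [hΔ] at hnΔ
      simp only [Finset.mem_filter, Finset.mem_univ, true_and, not_not] at hnΔ
      exact hwne hnΔ
    have htau : tau D ≤ Δ.card := Nat.sInf_le ⟨Δ, hFVS, rfl⟩
    refine le_trans htau ?_
    unfold hammingDist
    apply Finset.card_le_card
    intro v hvΔ
    simp only [hΔ, Finset.mem_filter, Finset.mem_univ, true_and] at hvΔ ⊢
    intro hxe
    apply hvΔ
    have hsymm : e.symm (x v) = e.symm (g x v) := by rw [hxe]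
    rw [hg] at hsymm
    simp only [Equiv.symm_apply_apply] at hsymm
    exact hsymm
  have hinF : inF D g := by
    rintro u v ⟨x, y, hxy, hne⟩
    refine hfA u v ⟨fun u' => e.symm (x u'), fun u' => e.symm (y u'), ?_, ?_⟩
    · intro w hw
      show e.symm (x w) = e.symm (y w)
      rw [hxy w hw]
    · intro hfe
      apply hne
      show e (f' (fun u => e.symm (x u)) v) = e (f' (fun u => e.symm (y u)) v)
      exact congrArg e hfe
  have hmem : tau D ∈ {m | ∃ f : (Fin n → Fin (2 ^ chromCycles D)) →
      (Fin n → Fin (2 ^ chromCycles D)), inF D f ∧ ∀ x, m ≤ hammingDist x (f x)} :=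
    ⟨g, hinF, hham⟩
  have hbdd : BddAbove {m | ∃ f : (Fin n → Fin (2 ^ chromCycles D)) →
      (Fin n → Fin (2 ^ chromCycles D)), inF D f ∧ ∀ x, m ≤ hammingDist x (f x)} := by
    refine ⟨n, ?_⟩
    rintro m ⟨f, _, hm⟩
    calc m ≤ hammingDist (fun _ => e (fun _ => false)) (f (fun _ => e (fun _ => false))) := hm _
      _ ≤ Fintype.card (Fin n) := hammingDist_le_card_fintype
      _ = n := by simp
  exact le_csSup hbdd hmem

/-- sup_{q ≥ 2} i(D,q) = τ(D), and moreover i(D, 2^{χ'(D)}) = τ(D),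
where χ'(D) is the chromatic number of the intersection graph of chordless cycles. -/
theorem stmt12 (n : ℕ) (D : Fin n → Fin n → Prop) (hD : ∀ v, ¬ D v v) :
    sSup {m | ∃ q, 2 ≤ q ∧ m = instab D q} = tau D ∧
    instab D (2 ^ chromCycles D) = tau D := by
  classical
  have hpart2 : instab D (2 ^ chromCycles D) = tau D :=
    le_antisymm (instab_le_tau D _ Nat.one_le_two_pow) (tau_le_instab D hD)
  refine ⟨le_antisymm ?_ ?_, hpart2⟩
  · refine csSup_le' ?_
    rintro m ⟨q, hq, rfl⟩
    exact instab_le_tau D q (by omega)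
  · by_cases hk : 1 ≤ chromCycles D
    · have h2 : 2 ≤ 2 ^ chromCycles D := by
        calc 2 = 2 ^ 1 := rfl
        _ ≤ 2 ^ chromCycles D := Nat.pow_le_pow_right (by norm_num) hk
      have hbdd : BddAbove {m | ∃ q, 2 ≤ q ∧ m = instab D q} := by
        refine ⟨tau D, ?_⟩
        rintro m ⟨q, hq, rfl⟩
        exact instab_le_tau D q (by omega)
      have hmem : instab D (2 ^ chromCycles D) ∈ {m | ∃ q, 2 ≤ q ∧ m = instab D q} :=
        ⟨_, h2, rfl⟩
      exact le_trans (tau_le_instab D hD) (le_csSup hbdd hmem)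
    · have hk0 : chromCycles D = 0 := by omega
      have h1 : tau D ≤ instab D 1 := by
        have h := tau_le_instab D hD
        rw [hk0, pow_zero] at h
        exact h
      have h2 : instab D 1 ≤ 0 := by
        refine csSup_le' ?_
        rintro m ⟨f, _, hm⟩
        have hfx : f (fun _ => (0 : Fin 1)) = (fun _ => (0 : Fin 1)) := by
          funext v
          exact Subsingleton.elim _ _
        have h3 := hm (fun _ => (0 : Fin 1))
        rw [hfx] at h3
        simpa using h3
      have htau0 : tau D = 0 := by omega
      rw [htau0]
      exact Nat.zero_le _
end

section
/- Let D be a loopless digraph on n vertices, q ≥ 2, and τ = τ(D). Then the q-stability satisfies s(D,q) ≤ τ / ⌊(q−1)^{1/τ}⌋ (interpreting the right side as a rational bound, i.e., s(D,q) · ⌊(q−1)^{1/τ}⌋ ≤ τ). -/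
lemma not_dep_eq {n : ℕ} {A : Type} {g : (Fin n → A) → A} {u : Fin n}
    (h : ¬ dependsOn g u) (x y : Fin n → A) (hxy : ∀ w, w ≠ u → x w = y w) :
    g x = g y := by
  by_contra hne; exact h ⟨x, y, hxy, hne⟩

lemma agree_deps_aux {n q : ℕ} {D : Fin n → Fin n → Prop}
    {f : (Fin n → Fin q) → (Fin n → Fin q)} (hf : inF D f) (w : Fin n) :
    ∀ (s : Finset (Fin n)) (x y : Fin n → Fin q),
      (∀ u, x u ≠ y u → u ∈ s ∧ ¬ D u w) → f x w = f y w := by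
  intro s
  induction s using Finset.induction_on with
  | empty =>
    intro x y h
    have : x = y := by
      funext u
      by_contra hne
      simpa using (h u hne).1
    rw [this]
  | @insert a s ha ih =>
    intro x y h
    have h1 : f x w = f (Function.update x a (y a)) w := by
      by_cases hxa : x a = y a
      · rw [← hxa, Function.update_eq_self]
      · have hnd : ¬ dependsOn (fun t => f t w) a := fun hd => (h a hxa).2 (hf a w hd)
        exact not_dep_eq hnd x _ (fun u hu => (Function.update_of_ne hu _ _).symm)
    have h2 : f (Function.update x a (y a)) w = f y w := by
      apply ih
      intro u hu
      by_cases hua : u = a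
      · subst hua; simp at hu
      · rw [Function.update_of_ne hua] at hu
        rcases h u hu with ⟨hmem, hnd⟩
        exact ⟨(Finset.mem_insert.mp hmem).resolve_left hua, hnd⟩
    exact h1.trans h2

lemma agree_deps {n q : ℕ} {D : Fin n → Fin n → Prop}
    {f : (Fin n → Fin q) → (Fin n → Fin q)} (hf : inF D f) (w : Fin n)
    (x y : Fin n → Fin q) (h : ∀ u, D u w → x u = y u) : f x w = f y w :=
  agree_deps_aux hf w Finset.univ x y
    (fun u hu => ⟨Finset.mem_univ u, fun hD => hu (h u hD)⟩)

private lemma stmt13_core {n q p : ℕ} (hq : 2 ≤ q) (D : Fin n → Fin n → Prop)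
    (hD : ∀ v, ¬ D v v) (I : Finset (Fin n)) (hI : isFVS D I)
    (hp1 : 1 ≤ p) (hple : p ≤ q) (hpq : p ^ I.card < q)
    (f : (Fin n → Fin q) → (Fin n → Fin q)) (hf : inF D f) :
    ∃ x : Fin n → Fin q,
      (Finset.univ.filter (fun v => f x v = x v)).card * p ≤ I.card := by
  classical
  have hq0 : 0 < q := by omega
  set R : Fin n → Fin n → Prop :=
    Relation.TransGen (fun a b => D a b ∧ a ∉ I ∧ b ∉ I) with hR
  have hwf : WellFounded R := by
    have h1 : IsTrans (Fin n) R := ⟨fun a b c hab hbc => hab.trans hbc⟩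
    have h2 : IsIrrefl (Fin n) R := ⟨hI⟩
    exact Finite.wellFounded_of_trans_of_irrefl R
  set d0 : Fin q := ⟨0, hq0⟩ with hd0
  set eA : Fin p → Fin q := Fin.castLE hple with heA
  have heA_inj : Function.Injective eA := Fin.castLE_injective hple
  set pick : Finset (Fin q) → Fin q := fun S =>
    if h : Sᶜ.Nonempty then Sᶜ.min' h else d0 with hpick
  have hpick_spec : ∀ S : Finset (Fin q), S.card < q → pick S ∉ S := by
    intro S hS
    have hne : Sᶜ.Nonempty := by
      rw [← Finset.card_pos, Finset.card_compl, Fintype.card_fin]; omega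
    have hmem : pick S ∈ Sᶜ := by
      rw [hpick]; simp only [dif_pos hne]; exact Finset.min'_mem _ hne
    exact Finset.mem_compl.mp hmem
  -- cardinality of the parameter space
  have hcardY : Fintype.card ({v // v ∈ I} → Fin p) = p ^ I.card := by
    rw [Fintype.card_fun, Fintype.card_fin, Fintype.card_coe]
  -- the constant part, by well-founded recursion
  set F : (w : Fin n) → ((u : Fin n) → R u w → Fin q) → Fin q := fun w rec =>
    pick (Finset.image (fun y : ({v // v ∈ I} → Fin p) => f (fun u =>
      if hu : u ∈ I then eA (y ⟨u, hu⟩)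
      else if h2 : R u w then rec u h2 else d0) w) Finset.univ) with hF
  set c : Fin n → Fin q := hwf.fix F with hcdef
  have hc : ∀ w, c w = F w (fun u _ => c u) := by
    intro w
    rw [hcdef]
    exact hwf.fix_eq F w
  set X : ({v // v ∈ I} → Fin p) → Fin n → Fin q := fun y u =>
    if hu : u ∈ I then eA (y ⟨u, hu⟩) else c u with hX
  -- outside I: X y w computes to c w, and f (X y) w is in the avoided image
  have hbuild : ∀ (w : Fin n), w ∉ I → ∀ (y : {v // v ∈ I} → Fin p),
      f (X y) w = f (fun u =>
        if hu : u ∈ I then eA (y ⟨u, hu⟩)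
        else if h2 : R u w then c u else d0) w := by
    intro w hw y
    apply agree_deps hf
    intro u hDuw
    by_cases hu : u ∈ I
    · simp [hX, hu]
    · have hRuw : R u w := Relation.TransGen.single ⟨hDuw, hu, hw⟩
      simp [hX, hu, hRuw]
  have hdis : ∀ (w : Fin n), w ∉ I → ∀ (y : {v // v ∈ I} → Fin p),
      f (X y) w ≠ X y w := by
    intro w hw y
    have hXw : X y w = c w := by simp [hX, hw]
    set S : Finset (Fin q) := Finset.image (fun y : ({v // v ∈ I} → Fin p) => f (fun u =>
      if hu : u ∈ I then eA (y ⟨u, hu⟩)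
      else if h2 : R u w then c u else d0) w) Finset.univ with hS
    have hScard : S.card < q :=
      lt_of_le_of_lt (le_trans Finset.card_image_le (by rw [Finset.card_univ, hcardY])) hpq
    have hnot : pick S ∉ S := hpick_spec S hScard
    have hmem : f (X y) w ∈ S := by
      rw [hbuild w hw y, hS]
      exact Finset.mem_image_of_mem _ (Finset.mem_univ y)
    have hcw : c w = pick S := hc w
    rw [hXw, hcw]
    intro hcon
    exact hnot (hcon ▸ hmem)
  -- inside I: f (X y) v does not depend on the v-coordinate of y
  have hIdep : ∀ (v : Fin n) (hv : v ∈ I) (y y' : {v // v ∈ I} → Fin p),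
      (∀ u, u ≠ ⟨v, hv⟩ → y u = y' u) → f (X y) v = f (X y') v := by
    intro v hv y y' hyy'
    apply agree_deps hf
    intro u hDuv
    by_cases hu : u ∈ I
    · have hune : (⟨u, hu⟩ : {v // v ∈ I}) ≠ ⟨v, hv⟩ := by
        intro hcon
        apply hD v
        have : u = v := congrArg Subtype.val hcon
        rwa [← this] at hDuv ⊢
      simp [hX, hu, hyy' _ hune]
    · simp [hX, hu]
  -- counting
  set agr : ({v // v ∈ I} → Fin p) → Finset (Fin n) :=
    fun y => Finset.univ.filter (fun v => f (X y) v = X y v) with hagr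
  have hsub : ∀ y, agr y ⊆ I := by
    intro y v hv
    rw [hagr] at hv
    simp only [Finset.mem_filter, Finset.mem_univ, true_and] at hv
    by_contra hvI
    exact hdis v hvI y hv
  have hXv : ∀ (v : Fin n) (hv : v ∈ I) (y : {v // v ∈ I} → Fin p),
      X y v = eA (y ⟨v, hv⟩) := by
    intro v hv y; simp [hX, hv]
  have hv_cnt : ∀ (v : Fin n), v ∈ I →
      (Finset.univ.filter (fun y : ({v // v ∈ I} → Fin p) => v ∈ agr y)).card * p
        ≤ p ^ I.card := by
    intro v hv
    have key := Finset.card_le_card_of_injOn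
      (f := fun z : ({v // v ∈ I} → Fin p) × Fin p => Function.update z.1 ⟨v, hv⟩ z.2)
      (s := (Finset.univ.filter (fun y : ({v // v ∈ I} → Fin p) => v ∈ agr y)) ×ˢ
        Finset.univ)
      (t := Finset.univ)
      (fun _ _ => Finset.mem_univ _)
      ?_
    · rw [Finset.card_product, Finset.card_univ, Finset.card_univ, Fintype.card_fin,
        hcardY] at key
      exact key
    · intro z hz z' hz' heq
      simp only [Finset.mem_coe, Finset.mem_product, Finset.mem_filter, Finset.mem_univ,
        true_and, and_true] at hz hz'
      rw [hagr] at hz hz'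
      simp only [Finset.mem_filter, Finset.mem_univ, true_and] at hz hz'
      have hoff : ∀ u, u ≠ ⟨v, hv⟩ → z.1 u = z'.1 u := by
        intro u hu
        have h3 : Function.update z.1 ⟨v, hv⟩ z.2 u
            = Function.update z'.1 ⟨v, hv⟩ z'.2 u := congrFun heq u
        rwa [Function.update_of_ne hu, Function.update_of_ne hu] at h3
      have hfeq : f (X z.1) v = f (X z'.1) v := hIdep v hv z.1 z'.1 hoff
      have h1 : z.1 = z'.1 := by
        funext u
        by_cases hu : u = ⟨v, hv⟩
        · subst hu
          apply heA_inj
          rw [← hXv v hv z.1, ← hXv v hv z'.1, ← hz, ← hz', hfeq]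
        · exact hoff u hu
      have h2 : z.2 = z'.2 := by
        have h3 : Function.update z.1 ⟨v, hv⟩ z.2 ⟨v, hv⟩
            = Function.update z'.1 ⟨v, hv⟩ z'.2 ⟨v, hv⟩ := congrFun heq ⟨v, hv⟩
        rwa [Function.update_self, Function.update_self] at h3
      exact Prod.ext h1 h2
  -- now put the counting together
  by_contra hcon
  push_neg at hcon
  have hlow : ∀ y : ({v // v ∈ I} → Fin p), I.card + 1 ≤ (agr y).card * p := by
    intro y
    exact Nat.succ_le_of_lt (hcon (X y))
  have hNpos : 0 < p ^ I.card := Nat.pow_pos hp1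
  have hcard_agr : ∀ y, (agr y).card = ∑ v ∈ I, (if v ∈ agr y then 1 else 0) := by
    intro y
    have h1 : agr y = I.filter (fun v => v ∈ agr y) := by
      ext v
      simp only [Finset.mem_filter, and_iff_right_iff_imp, iff_and_self]
      · exact fun hv => hsub y hv
    conv_lhs => rw [h1]
    rw [Finset.card_filter]
  have hchain : (I.card + 1) * p ^ I.card ≤ I.card * p ^ I.card := by
    calc (I.card + 1) * p ^ I.card
        = ∑ _y : ({v // v ∈ I} → Fin p), (I.card + 1) := by
          rw [Finset.sum_const, Finset.card_univ, hcardY, smul_eq_mul, mul_comm]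
      _ ≤ ∑ y : ({v // v ∈ I} → Fin p), (agr y).card * p :=
          Finset.sum_le_sum (fun y _ => hlow y)
      _ = (∑ y : ({v // v ∈ I} → Fin p), (agr y).card) * p := by
          rw [Finset.sum_mul]
      _ = (∑ y : ({v // v ∈ I} → Fin p), ∑ v ∈ I, (if v ∈ agr y then 1 else 0)) * p := by
          congr 1
          exact Finset.sum_congr rfl (fun y _ => hcard_agr y)
      _ = (∑ v ∈ I, ∑ y : ({v // v ∈ I} → Fin p), (if v ∈ agr y then 1 else 0)) * p := by
          rw [Finset.sum_comm]
      _ = (∑ v ∈ I, (Finset.univ.filter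
            (fun y : ({v // v ∈ I} → Fin p) => v ∈ agr y)).card) * p := by
          congr 1
          exact Finset.sum_congr rfl (fun v _ => (Finset.card_filter _ _).symm)
      _ = ∑ v ∈ I, (Finset.univ.filter
            (fun y : ({v // v ∈ I} → Fin p) => v ∈ agr y)).card * p := by
          rw [Finset.sum_mul]
      _ ≤ ∑ v ∈ I, p ^ I.card := Finset.sum_le_sum (fun v hv => hv_cnt v hv)
      _ = I.card * p ^ I.card := by rw [Finset.sum_const, smul_eq_mul]
  have : I.card * p ^ I.card + p ^ I.card ≤ I.card * p ^ I.card + 0 := by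
    calc I.card * p ^ I.card + p ^ I.card = (I.card + 1) * p ^ I.card := by ring
      _ ≤ I.card * p ^ I.card := hchain
      _ = I.card * p ^ I.card + 0 := by ring
  have := Nat.le_of_add_le_add_left this
  omega

/-- s(D,q) · ⌊(q-1)^{1/τ}⌋ ≤ τ(D). -/
theorem stmt13 (n q : ℕ) (hq : 2 ≤ q) (D : Fin n → Fin n → Prop)
    (hD : ∀ v, ¬ D v v) (p : ℕ)
    (hp : p = ⌊((q : ℝ) - 1) ^ (((tau D : ℝ))⁻¹)⌋₊) :
    stab D q * p ≤ tau D := by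
  classical
  have huniv : isFVS D Finset.univ := by
    intro v h
    cases h with
    | single h => exact h.2.1 (Finset.mem_univ _)
    | tail _ h => exact h.2.2 (Finset.mem_univ _)
  have hne : {k | ∃ I : Finset (Fin n), isFVS D I ∧ I.card = k}.Nonempty :=
    ⟨Finset.univ.card, Finset.univ, huniv, rfl⟩
  have hmem : tau D ∈ {k | ∃ I : Finset (Fin n), isFVS D I ∧ I.card = k} :=
    Nat.sInf_mem hne
  obtain ⟨I, hIfvs, hIcard⟩ := hmem
  set t := tau D with htdef
  have hq1 : (1:ℝ) ≤ (q:ℝ) - 1 := by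
    have : (2:ℝ) ≤ (q:ℝ) := by exact_mod_cast hq
    linarith
  have hq0 : (0:ℝ) ≤ (q:ℝ) - 1 := by linarith
  have hp1 : 1 ≤ p := by
    rw [hp]
    apply Nat.le_floor
    rw [Nat.cast_one]
    exact Real.one_le_rpow hq1 (by positivity)
  have hpt : p ^ t < q := by
    by_cases ht0 : t = 0
    · rw [ht0, pow_zero]; omega
    · have h1 : (p:ℝ) ≤ ((q:ℝ)-1) ^ ((t:ℝ))⁻¹ := by
        rw [hp]
        exact Nat.floor_le (Real.rpow_nonneg hq0 _)
      have h2 : ((p:ℝ))^(t:ℕ) ≤ (((q:ℝ)-1) ^ ((t:ℝ))⁻¹)^(t:ℕ) :=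
        pow_le_pow_left₀ (by positivity) h1 t
      have h3 : ((((q:ℝ)-1) ^ ((t:ℝ))⁻¹))^(t:ℕ) = (q:ℝ)-1 := by
        rw [← Real.rpow_natCast ((((q:ℝ)-1) ^ ((t:ℝ))⁻¹)) t, ← Real.rpow_mul hq0,
          inv_mul_cancel₀ (by exact_mod_cast ht0), Real.rpow_one]
      rw [h3] at h2
      have h4 : ((p ^ t : ℕ) : ℝ) ≤ ((q - 1 : ℕ) : ℝ) := by
        push_cast [Nat.cast_sub (by omega : 1 ≤ q)]
        exact_mod_cast h2
      have := Nat.cast_le.mp h4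
      omega
  have hple : p ≤ q := by
    by_cases ht0 : t = 0
    · have hpone : p = 1 := by
        rw [hp, ht0]
        simp
      omega
    · calc p ≤ p ^ t := Nat.le_self_pow ht0 p
        _ ≤ q := le_of_lt hpt
  have hub : stab D q ≤ t / p := by
    apply csSup_le'
    rintro m ⟨f, hf, hmin⟩
    rw [Nat.le_div_iff_mul_le (by omega : 0 < p)]
    obtain ⟨x, hx⟩ := stmt13_core hq D hD I hIfvs hp1 hple (by rw [hIcard]; exact hpt) f hf
    calc m * p ≤ (Finset.univ.filter (fun v => f x v = x v)).card * p :=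
          Nat.mul_le_mul_right p (hmin x)
      _ ≤ I.card := hx
      _ = t := hIcard
  calc stab D q * p ≤ (t / p) * p := Nat.mul_le_mul_right p hub
    _ ≤ t := Nat.div_mul_le_self t p
end

section
/- Let D be a loopless digraph with τ = τ(D), and for m ≥ 1 set Q(m) = 2 + Σ_{a=1}^m a^a. Then s(D, Q(m)) ≤ τ − m for all 1 ≤ m ≤ τ; in particular s(D, Q(τ)) = 0. -/
namespace Stmt14Aux

noncomputable section
open scoped Classical
open Finset

/-- The blocking game: `T` is winning if every coloring admits a "good pair":
two points equal except at the coordinate which is their common color. -/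
def Win (m : ℕ) (T : Finset (Fin m → ℕ)) : Prop :=
  ∀ Φ : (Fin m → ℕ) → Fin m, ∃ c ∈ T, ∃ c' ∈ T, c ≠ c' ∧ Φ c = Φ c' ∧
    ∀ i, i ≠ Φ c → c i = c' i

theorem exists_win : ∀ m : ℕ, 1 ≤ m → ∃ T : Finset (Fin m → ℕ),
    T.card = 1 + ∑ a ∈ Finset.Icc 1 m, a ^ a ∧ (∀ c ∈ T, ∀ i, c i ≤ m) ∧ Win m T := by
  intro m hm
  induction m, hm using Nat.le_induction with
  | base =>
    refine ⟨{fun _ => 0, fun _ => 1}, ?_, ?_, ?_⟩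
    · rw [Finset.card_insert_of_notMem, Finset.card_singleton]
      · simp
      · simp only [Finset.mem_singleton]
        intro h
        exact absurd (congrFun h 0) (by norm_num)
    · intro c hc i
      rcases Finset.mem_insert.mp hc with h | h
      · subst h; norm_num
      · rw [Finset.mem_singleton] at h; subst h; norm_num
    · intro Φ
      refine ⟨fun _ => 0, by simp, fun _ => 1, by simp, ?_, ?_, ?_⟩
      · intro h; exact absurd (congrFun h 0) (by norm_num)
      · exact Subsingleton.elim _ _
      · intro i hi
        exact absurd (Subsingleton.elim i (Φ fun _ => 0)) hi
  | succ m hm ih =>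
    obtain ⟨T, hTcard, hTbd, hTwin⟩ := ih
    set CUBE : Finset (Fin (m+1) → ℕ) :=
      Fintype.piFinset (fun _ : Fin (m+1) => Finset.range (m+1)) with hCUBE
    set TOP : Finset (Fin (m+1) → ℕ) := T.image (fun t => Fin.snoc t (m+1)) with hTOP
    have hsnoc_inj : Function.Injective (fun t : Fin m → ℕ => (Fin.snoc t (m+1) : Fin (m+1) → ℕ)) := by
      intro a b h
      funext k
      have := congrFun h k.castSucc
      simpa [Fin.snoc_castSucc] using this
    have htopmem : ∀ t ∈ T, (Fin.snoc t (m+1) : Fin (m+1) → ℕ) ∈ CUBE ∪ TOP := by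
      intro t ht
      exact Finset.mem_union_right _ (Finset.mem_image.mpr ⟨t, ht, rfl⟩)
    have hdisj : Disjoint CUBE TOP := by
      rw [Finset.disjoint_left]
      intro c hc hc'
      obtain ⟨t, ht, rfl⟩ := Finset.mem_image.mp hc'
      have h1 : (Fin.snoc t (m+1) : Fin (m+1) → ℕ) (Fin.last m) < m + 1 :=
        Finset.mem_range.mp (Fintype.mem_piFinset.mp hc (Fin.last m))
      rw [Fin.snoc_last] at h1
      omega
    have hbd : ∀ c ∈ CUBE ∪ TOP, ∀ i, c i ≤ m + 1 := by
      intro c hc i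
      rcases Finset.mem_union.mp hc with h | h
      · have := Finset.mem_range.mp (Fintype.mem_piFinset.mp h i)
        omega
      · obtain ⟨t, ht, rfl⟩ := Finset.mem_image.mp h
        induction i using Fin.lastCases with
        | last => rw [Fin.snoc_last]
        | cast k =>
          rw [Fin.snoc_castSucc]
          exact le_trans (hTbd t ht k) (by omega)
    have hlt : ∀ c ∈ CUBE ∪ TOP, ∀ i, i ≠ Fin.last m → c i < m + 1 := by
      intro c hc i hi
      rcases Finset.mem_union.mp hc with h | h
      · exact Finset.mem_range.mp (Fintype.mem_piFinset.mp h i)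
      · obtain ⟨t, ht, rfl⟩ := Finset.mem_image.mp h
        obtain ⟨k, rfl⟩ := Fin.exists_castSucc_eq.mpr hi
        rw [Fin.snoc_castSucc]
        exact lt_of_le_of_lt (hTbd t ht k) (by omega)
    have hcubecard : CUBE.card = (m+1)^(m+1) := by
      rw [hCUBE, Fintype.card_piFinset]
      simp
    have picard : ∀ (j : Fin (m+1)) (S : Fin (m+1) → Finset ℕ),
        (∀ i, i ≠ j → S i = Finset.range (m+1)) → (S j).card = 1 →
        (Fintype.piFinset S).card = (m+1)^m := by
      intro j S hS hj
      rw [Fintype.card_piFinset, ← Finset.prod_erase_mul Finset.univ _ (Finset.mem_univ j), hj,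
        mul_one, Finset.prod_congr rfl
          (fun i hi => by rw [hS i (Finset.ne_of_mem_erase hi), Finset.card_range]),
        Finset.prod_const, Finset.card_erase_of_mem (Finset.mem_univ j), Finset.card_univ]
      simp
    have picard2 : ∀ (j k : Fin (m+1)), j ≠ k → ∀ (S : Fin (m+1) → Finset ℕ),
        (∀ i, i ≠ j → i ≠ k → S i = Finset.range (m+1)) → (S j).card = 1 → (S k).card = 1 →
        (Fintype.piFinset S).card = (m+1)^(m-1) := by
      intro j k hjk S hS hj hk
      rw [Fintype.card_piFinset, ← Finset.prod_erase_mul Finset.univ _ (Finset.mem_univ j), hj,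
        mul_one, ← Finset.prod_erase_mul _ _
          (Finset.mem_erase.mpr ⟨Ne.symm hjk, Finset.mem_univ k⟩), hk, mul_one,
        Finset.prod_congr rfl (fun i hi => by
          rw [hS i (Finset.ne_of_mem_erase (Finset.mem_of_mem_erase hi))
            (Finset.ne_of_mem_erase hi), Finset.card_range]),
        Finset.prod_const, Finset.card_erase_of_mem
          (Finset.mem_erase.mpr ⟨Ne.symm hjk, Finset.mem_univ k⟩),
        Finset.card_erase_of_mem (Finset.mem_univ j), Finset.card_univ]
      simp
    refine ⟨CUBE ∪ TOP, ?_, ?_, ?_⟩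
    · rw [Finset.card_union_of_disjoint hdisj, hTOP,
        Finset.card_image_of_injective _ hsnoc_inj, hTcard, hcubecard,
        Finset.sum_Icc_succ_top (by omega : 1 ≤ m + 1)]
      ring
    · exact hbd
    · intro Φ
      by_contra hcon
      push_neg at hcon
      have keyj : ∀ j : Fin (m+1), ∀ c ∈ CUBE ∪ TOP, ∀ c' ∈ CUBE ∪ TOP,
          Φ c = j → Φ c' = j → (∀ i, i ≠ j → c i = c' i) → c = c' := by
        intro j c hc c' hc' hj hj' hagree
        by_contra hne
        obtain ⟨i, hi, hdiff⟩ := hcon c hc c' hc' hne (hj.trans hj'.symm)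
        rw [hj] at hi
        exact hdiff (hagree i hi)
      set E : Finset (Fin (m+1) → ℕ) :=
        (CUBE ∪ TOP).filter (fun c => Φ c = Fin.last m) with hE
      set Ed : ℕ → Finset (Fin (m+1) → ℕ) :=
        fun d => E.filter (fun c => c (Fin.last m) = d) with hEd
      have hEcard : E.card ≤ (m + 1) ^ m := by
        have hmaps : ∀ c ∈ E, Function.update c (Fin.last m) 0 ∈ Fintype.piFinset
            (fun i => if i = Fin.last m then ({0} : Finset ℕ) else Finset.range (m+1)) := by
          intro c hc
          rw [Fintype.mem_piFinset]
          intro i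
          by_cases h : i = Fin.last m
          · subst h; simp
          · rw [if_neg h, Function.update_of_ne h, Finset.mem_range]
            exact hlt c (Finset.mem_filter.mp hc).1 i h
        have hinj : Set.InjOn (fun c => Function.update c (Fin.last m) 0) (E : Set (Fin (m+1) → ℕ)) := by
          intro c hc c' hc' h
          have hc1 := Finset.mem_filter.mp hc
          have hc2 := Finset.mem_filter.mp hc'
          refine keyj (Fin.last m) c hc1.1 c' hc2.1 hc1.2 hc2.2 ?_
          intro i hi
          have := congrFun h i
          simpa [Function.update_of_ne hi] using this
        calc E.card ≤ _ := Finset.card_le_card_of_injOn _ hmaps hinj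
          _ = (m+1)^m := picard (Fin.last m) _ (fun i hi => if_neg hi) (by simp)
      have hEd_lower : ∀ d : ℕ, d < m + 1 → (m+1)^(m-1) ≤ (Ed d).card := by
        intro d hd
        set L : Finset (Fin (m+1) → ℕ) := CUBE.filter (fun c => c (Fin.last m) = d) with hL
        have hLcard : L.card = (m+1)^m := by
          have hLeq : L = Fintype.piFinset
              (fun i => if i = Fin.last m then ({d} : Finset ℕ) else Finset.range (m+1)) := by
            ext c
            rw [hL, Finset.mem_filter, hCUBE, Fintype.mem_piFinset, Fintype.mem_piFinset]
            constructor
            · rintro ⟨h1, h2⟩ i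
              by_cases h : i = Fin.last m
              · subst h; simp [h2]
              · rw [if_neg h]; exact h1 i
            · intro h
              constructor
              · intro i
                by_cases hh : i = Fin.last m
                · subst hh
                  have := h (Fin.last m)
                  rw [if_pos rfl, Finset.mem_singleton] at this
                  rw [this]
                  exact Finset.mem_range.mpr hd
                · have := h i; rwa [if_neg hh] at this
              · have := h (Fin.last m)
                rwa [if_pos rfl, Finset.mem_singleton] at this
          rw [hLeq]
          exact picard _ _ (fun i hi => if_neg hi) (by simp)
        have hLsub : L ⊆ CUBE ∪ TOP := fun c hc =>
          Finset.mem_union_left _ (Finset.mem_filter.mp hc).1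
        have hcover : L ⊆ (Ed d) ∪ (Finset.univ.erase (Fin.last m)).biUnion
            (fun j => L.filter (fun c => Φ c = j)) := by
          intro c hc
          by_cases h : Φ c = Fin.last m
          · apply Finset.mem_union_left
            rw [hEd, Finset.mem_filter, hE, Finset.mem_filter]
            exact ⟨⟨hLsub hc, h⟩, (Finset.mem_filter.mp hc).2⟩
          · apply Finset.mem_union_right
            exact Finset.mem_biUnion.mpr ⟨Φ c, Finset.mem_erase.mpr ⟨h, Finset.mem_univ _⟩,
              Finset.mem_filter.mpr ⟨hc, rfl⟩⟩
        have hclass : ∀ j : Fin (m+1), j ∈ Finset.univ.erase (Fin.last m) →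
            (L.filter (fun c => Φ c = j)).card ≤ (m+1)^(m-1) := by
          intro j hjmem
          have hj : j ≠ Fin.last m := Finset.ne_of_mem_erase hjmem
          have hmaps : ∀ c ∈ L.filter (fun c => Φ c = j), Function.update c j 0 ∈
              Fintype.piFinset (fun i => if i = j then ({0} : Finset ℕ)
                else if i = Fin.last m then ({d} : Finset ℕ) else Finset.range (m+1)) := by
            intro c hc
            obtain ⟨hcL, hcj⟩ := Finset.mem_filter.mp hc
            rw [Fintype.mem_piFinset]
            intro i
            by_cases h : i = j
            · subst h; simp
            · rw [if_neg h, Function.update_of_ne h]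
              by_cases hh : i = Fin.last m
              · subst hh
                rw [if_pos rfl, Finset.mem_singleton]
                exact (Finset.mem_filter.mp hcL).2
              · rw [if_neg hh, Finset.mem_range]
                exact hlt c (hLsub hcL) i hh
          have hinj : Set.InjOn (fun c => Function.update c j 0)
              ((L.filter (fun c => Φ c = j)) : Set (Fin (m+1) → ℕ)) := by
            intro c hc c' hc' h
            obtain ⟨hcL, hcj⟩ := Finset.mem_filter.mp hc
            obtain ⟨hcL', hcj'⟩ := Finset.mem_filter.mp hc'
            refine keyj j c (hLsub hcL) c' (hLsub hcL') hcj hcj' ?_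
            intro i hi
            have := congrFun h i
            simpa [Function.update_of_ne hi] using this
          calc (L.filter (fun c => Φ c = j)).card ≤ _ :=
                Finset.card_le_card_of_injOn _ hmaps hinj
            _ = (m+1)^(m-1) := picard2 j (Fin.last m) hj _
                (fun i h1 h2 => by rw [if_neg h1, if_neg h2]) (by simp) (by rw [if_neg (Ne.symm hj), if_pos rfl]; simp)
        have hcard1 : L.card ≤ (Ed d).card + m * (m+1)^(m-1) := by
          calc L.card ≤ ((Ed d) ∪ (Finset.univ.erase (Fin.last m)).biUnion
              (fun j => L.filter (fun c => Φ c = j))).card := Finset.card_le_card hcover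
            _ ≤ (Ed d).card + ((Finset.univ.erase (Fin.last m)).biUnion
              (fun j => L.filter (fun c => Φ c = j))).card := Finset.card_union_le _ _
            _ ≤ (Ed d).card + ∑ j ∈ Finset.univ.erase (Fin.last m),
                (L.filter (fun c => Φ c = j)).card :=
                  Nat.add_le_add_left (Finset.card_biUnion_le) _
            _ ≤ (Ed d).card + ∑ j ∈ Finset.univ.erase (Fin.last m), (m+1)^(m-1) :=
                  Nat.add_le_add_left (Finset.sum_le_sum hclass) _
            _ = (Ed d).card + m * (m+1)^(m-1) := by
                  rw [Finset.sum_const, Finset.card_erase_of_mem (Finset.mem_univ _),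
                    Finset.card_univ]
                  simp [mul_comm]
        have hpow : (m+1)^m = (m+1) * (m+1)^(m-1) := by
          obtain ⟨k, rfl⟩ : ∃ k, m = k + 1 := ⟨m - 1, by omega⟩
          rw [Nat.add_sub_cancel, pow_succ, mul_comm]
        rw [hLcard, hpow] at hcard1
        have : (m+1) * (m+1)^(m-1) = m * (m+1)^(m-1) + (m+1)^(m-1) := by ring
        omega
      have htopE : 1 ≤ (Ed (m+1)).card := by
        rw [Nat.one_le_iff_ne_zero, Ne, Finset.card_eq_zero, ← Ne,
          ← Finset.nonempty_iff_ne_empty]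
        by_contra hemp
        rw [Finset.not_nonempty_iff_eq_empty] at hemp
        have hnot : ∀ t ∈ T, Φ (Fin.snoc t (m+1)) ≠ Fin.last m := by
          intro t ht h
          have hmem : (Fin.snoc t (m+1) : Fin (m+1) → ℕ) ∈ Ed (m+1) := by
            rw [hEd, Finset.mem_filter, hE, Finset.mem_filter]
            exact ⟨⟨htopmem t ht, h⟩, Fin.snoc_last _ _⟩
          rw [hemp] at hmem
          exact absurd hmem (Finset.notMem_empty _)
        set φ' : (Fin m → ℕ) → Fin m := fun t =>
          if h : Φ (Fin.snoc t (m+1)) = Fin.last m then ⟨0, hm⟩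
          else Fin.castPred _ h with hφ'
        obtain ⟨t, ht, t', ht', hne, hfeq, hagree⟩ := hTwin φ'
        have h1 : Φ (Fin.snoc t (m+1)) ≠ Fin.last m := hnot t ht
        have h2 : Φ (Fin.snoc t' (m+1)) ≠ Fin.last m := hnot t' ht'
        have hφt : φ' t = Fin.castPred _ h1 := dif_neg h1
        have hφt' : φ' t' = Fin.castPred _ h2 := dif_neg h2
        have hPhieq : Φ (Fin.snoc t (m+1)) = Φ (Fin.snoc t' (m+1)) := by
          rw [← Fin.castSucc_castPred _ h1, ← Fin.castSucc_castPred _ h2, ← hφt, ← hφt', hfeq]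
        have hcne : (Fin.snoc t (m+1) : Fin (m+1) → ℕ) ≠ Fin.snoc t' (m+1) :=
          fun h => hne (hsnoc_inj h)
        obtain ⟨i, hi, hdiff⟩ := hcon _ (htopmem t ht) _ (htopmem t' ht') hcne hPhieq
        by_cases hil : i = Fin.last m
        · subst hil
          exact hdiff (by rw [Fin.snoc_last, Fin.snoc_last])
        · obtain ⟨k, rfl⟩ := Fin.exists_castSucc_eq.mpr hil
          apply hdiff
          rw [Fin.snoc_castSucc, Fin.snoc_castSucc]
          apply hagree
          intro hk
          apply hi
          rw [hk, hφt, Fin.castSucc_castPred]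
      have hsum : E.card = ∑ d ∈ Finset.range (m+2), (Ed d).card := by
        apply Finset.card_eq_sum_card_fiberwise
        intro c hc
        rw [Finset.coe_range, Set.mem_Iio]; dsimp only
        have := hbd c (Finset.mem_filter.mp (Finset.mem_coe.mp hc)).1 (Fin.last m)
        omega
      have hfinal : (m+1)^m + 1 ≤ E.card := by
        rw [hsum, Finset.sum_range_succ]
        have hsumlow : (m+1) * (m+1)^(m-1) ≤ ∑ d ∈ Finset.range (m+1), (Ed d).card := by
          calc (m+1) * (m+1)^(m-1) = ∑ _d ∈ Finset.range (m+1), (m+1)^(m-1) := by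
                rw [Finset.sum_const, Finset.card_range]; ring
            _ ≤ _ := Finset.sum_le_sum (fun d hd => hEd_lower d (Finset.mem_range.mp hd))
        have hpow : (m+1)^m = (m+1) * (m+1)^(m-1) := by
          obtain ⟨k, rfl⟩ : ∃ k, m = k + 1 := ⟨m - 1, by omega⟩
          rw [Nat.add_sub_cancel, pow_succ, mul_comm]
        omega
      omega

lemma indep_aux {n q : ℕ} {D : Fin n → Fin n → Prop} {f : (Fin n → Fin q) → (Fin n → Fin q)}
    (hf : inF D f) (v : Fin n) :
    ∀ S : Finset (Fin n), ∀ x y : Fin n → Fin q,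
      (∀ w, x w ≠ y w → w ∈ S ∧ ¬ D w v) → f x v = f y v := by
  intro S
  induction S using Finset.induction_on with
  | empty =>
    intro x y h
    have hxy : x = y := by
      funext w
      by_contra hw
      exact absurd (h w hw).1 (Finset.notMem_empty w)
    rw [hxy]
  | @insert a S ha ih =>
    intro x y h
    by_cases hxa : x a = y a
    · apply ih
      intro w hw
      obtain ⟨h1, h2⟩ := h w hw
      refine ⟨?_, h2⟩
      rcases Finset.mem_insert.mp h1 with rfl | hmem
      · exact absurd hxa hw
      · exact hmem
    · have hxz : f x v = f (Function.update x a (y a)) v := by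
        by_contra hne
        have hdep : dependsOn (fun z => f z v) a :=
          ⟨x, Function.update x a (y a),
            fun w hw => (Function.update_of_ne hw _ _).symm, hne⟩
        exact (h a hxa).2 (hf a v hdep)
      rw [hxz]
      apply ih
      intro w hw
      have hwa : w ≠ a := by
        intro hww
        subst hww
        rw [Function.update_self] at hw
        exact hw rfl
      rw [Function.update_of_ne hwa] at hw
      obtain ⟨h1, h2⟩ := h w hw
      refine ⟨?_, h2⟩
      rcases Finset.mem_insert.mp h1 with rfl | hmem
      · exact absurd rfl hwa
      · exact hmem
    
lemma indep {n q : ℕ} {D : Fin n → Fin n → Prop} {f : (Fin n → Fin q) → (Fin n → Fin q)}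
    (hf : inF D f) (v : Fin n) (x y : Fin n → Fin q)
    (h : ∀ w, D w v → x w = y w) : f x v = f y v :=
  indep_aux hf v Finset.univ x y
    (fun w hw => ⟨Finset.mem_univ w, fun hDw => hw (h w hDw)⟩)

lemma main_bound {n : ℕ} (D : Fin n → Fin n → Prop) (hD : ∀ v, ¬ D v v)
    (m : ℕ) (hm : 1 ≤ m) (hmτ : m ≤ tau D) :
    stab D (2 + ∑ a ∈ Finset.Icc 1 m, a ^ a) ≤ tau D - m := by
  set q := 2 + ∑ a ∈ Finset.Icc 1 m, a ^ a with hqdef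
  have hsumge : m ≤ ∑ a ∈ Finset.Icc 1 m, a ^ a := by
    calc m = ∑ _a ∈ Finset.Icc 1 m, 1 := by
          rw [Finset.sum_const, Nat.card_Icc, smul_eq_mul, mul_one]
          omega
      _ ≤ _ := Finset.sum_le_sum (fun a ha => Nat.one_le_pow _ _
          (by have := (Finset.mem_Icc.mp ha).1; omega))
  have hq0 : 0 < q := by omega
  -- minimum FVS
  have htau_mem : tau D ∈ {k | ∃ I : Finset (Fin n), isFVS D I ∧ I.card = k} := by
    apply Nat.sInf_mem
    refine ⟨(Finset.univ : Finset (Fin n)).card, Finset.univ, ?_, rfl⟩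
    intro w hw
    cases hw with
    | single h => exact h.2.1 (Finset.mem_univ _)
    | tail _ h => exact h.2.1 (Finset.mem_univ _)
  obtain ⟨I, hIfvs, hIcard⟩ := htau_mem
  have hmI : m ≤ I.card := by omega
  obtain ⟨J, hJI, hJcard⟩ := Finset.exists_subset_card_eq hmI
  obtain ⟨T, hTcard, hTbd, hTwin⟩ := exists_win m hm
  have hTq : T.card + 1 = q := by omega
  -- enumeration of J
  set e := J.orderIsoOfFin hJcard with he
  set vtx : Fin m → Fin n := fun j => (e j : Fin n) with hvtx
  have hvJ : ∀ j, vtx j ∈ J := fun j => (e j).2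
  have hvI : ∀ j, vtx j ∈ I := fun j => hJI (hvJ j)
  -- bound the sup
  have hne0 : {M | ∃ f : (Fin n → Fin q) → (Fin n → Fin q), inF D f ∧
      ∀ x, M ≤ (Finset.univ.filter (fun v => f x v = x v)).card}.Nonempty := by
    refine ⟨0, fun _ _ => (⟨0, hq0⟩ : Fin q), ?_, fun x => Nat.zero_le _⟩
    rintro u w ⟨x, y, _, hne⟩
    exact absurd rfl hne
  unfold stab
  apply csSup_le hne0
  rintro M ⟨f, hf, hM⟩
  by_contra hMgt
  push_neg at hMgt
  -- the candidate points
  have hpick : ∀ s : Finset (Fin q), s.card < q → ∃ a, a ∉ s := by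
    intro s hs
    by_contra hall
    push_neg at hall
    have hsub : (Finset.univ : Finset (Fin q)) ⊆ s := fun a _ => hall a
    have := Finset.card_le_card hsub
    rw [Finset.card_univ, Fintype.card_fin] at this
    omega
  have hTlt : ∀ s : Finset (Fin q), s ⊆ {} ∨ True := fun _ => Or.inr trivial
  set ι : ℕ → Fin q := fun a => ⟨a % q, Nat.mod_lt _ hq0⟩ with hι
  set y : (Fin m → ℕ) → Fin n → Fin q := fun c w =>
    if h : w ∈ J then ι (c (e.symm ⟨w, h⟩)) else ι 0 with hy
  set R : Fin n → Fin n → Prop := fun a b => D a b ∧ a ∉ I ∧ b ∉ I with hR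
  set r := Relation.TransGen R with hr
  haveI : IsTrans (Fin n) r := ⟨fun _ _ _ => Relation.TransGen.trans⟩
  haveI : IsIrrefl (Fin n) r := ⟨hIfvs⟩
  have hwf : WellFounded r := Finite.wellFounded_of_trans_of_irrefl r
  have hcardlt : ∀ s : Finset (Fin q), s.card ≤ T.card → s.card < q := by
    intro s hs; omega
  obtain ⟨g, hg⟩ : ∃ g : Fin n → Fin q, ∀ u, g u ∉
      T.image (fun c => f (fun w => if _hw : w ∈ I then y c w
        else if hr : r w u then g w else ι 0) u) := by
    refine ⟨WellFounded.fix hwf (fun u rec => (hpick (T.image (fun c =>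
      f (fun w => if _hw : w ∈ I then y c w
        else if hr : r w u then rec w hr else ι 0) u))
      (hcardlt _ Finset.card_image_le)).choose), fun u => ?_⟩
    rw [WellFounded.fix_eq]
    exact (hpick _ (hcardlt _ Finset.card_image_le)).choose_spec
  set x : (Fin m → ℕ) → Fin n → Fin q := fun c w => if w ∈ I then y c w else g w with hx
  -- escape property
  have hescape : ∀ c ∈ T, ∀ u, u ∉ I → f (x c) u ≠ x c u := by
    intro c hc u hu
    have hxcu : x c u = g u := by simp only [hx, if_neg hu]
    have hfp : f (x c) u = f (fun w => if _hw : w ∈ I then y c w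
        else if hr : r w u then g w else ι 0) u := by
      apply indep hf u
      intro w hDw
      by_cases hwI : w ∈ I
      · simp only [hx, if_pos hwI, dif_pos hwI]
      · have hwu : r w u := Relation.TransGen.single ⟨hDw, hwI, hu⟩
        simp only [hx, if_neg hwI, dif_neg hwI, dif_pos hwu]
    intro heq
    apply hg u
    apply Finset.mem_image.mpr ⟨c, hc, ?_⟩
    rw [← hfp, heq, hxcu]
  -- value property
  have hxval : ∀ c (j : Fin m), x c (vtx j) = ι (c j) := by
    intro c j
    have h1 : x c (vtx j) = y c (vtx j) := by simp only [hx, if_pos (hvI j)]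
    rw [h1]
    simp only [hy]
    rw [dif_pos (hvJ j)]
    congr 1
    have h2 : (⟨vtx j, hvJ j⟩ : {z // z ∈ J}) = e j := Subtype.ext rfl
    rw [h2, OrderIso.symm_apply_apply]
  -- agreement property
  have hagree_pt : ∀ c c' (j : Fin m), (∀ i, i ≠ j → c i = c' i) →
      ∀ w, w ≠ vtx j → x c w = x c' w := by
    intro c c' j hag w hw
    by_cases hwI : w ∈ I
    · simp only [hx, if_pos hwI, hy]
      by_cases hwJ : w ∈ J
      · rw [dif_pos hwJ, dif_pos hwJ]
        congr 1
        apply hag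
        intro heq
        apply hw
        have h3 : (⟨w, hwJ⟩ : {z // z ∈ J}) = e j := by
          rw [← heq, OrderIso.apply_symm_apply]
        have h4 := congrArg Subtype.val h3
        simpa [hvtx] using h4
      · rw [dif_neg hwJ, dif_neg hwJ]
    · simp only [hx, if_neg hwI]
  -- each candidate has a fixed coordinate in J
  have hfix : ∀ c ∈ T, ∃ j : Fin m, f (x c) (vtx j) = x c (vtx j) := by
    intro c hc
    have hMle := hM (x c)
    set Fx := Finset.univ.filter (fun w => f (x c) w = x c w) with hFx
    have hFI : Fx ⊆ I := by
      intro w hwmem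
      rw [hFx, Finset.mem_filter] at hwmem
      by_contra hwI
      exact hescape c hc w hwI hwmem.2
    have hsplit : Fx ⊆ (Fx ∩ J) ∪ (I \ J) := by
      intro w hwmem
      by_cases hwJ : w ∈ J
      · exact Finset.mem_union_left _ (Finset.mem_inter.mpr ⟨hwmem, hwJ⟩)
      · exact Finset.mem_union_right _ (Finset.mem_sdiff.mpr ⟨hFI hwmem, hwJ⟩)
    have hIJ : (I \ J).card = tau D - m := by
      rw [Finset.card_sdiff_of_subset hJI, hIcard, hJcard]
    have h1 : Fx.card ≤ (Fx ∩ J).card + (I \ J).card := by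
      calc Fx.card ≤ _ := Finset.card_le_card hsplit
        _ ≤ _ := Finset.card_union_le _ _
    rw [hIJ] at h1
    have h2 : 1 ≤ (Fx ∩ J).card := by omega
    obtain ⟨w, hw⟩ := Finset.card_pos.mp h2
    obtain ⟨hwFx, hwJ⟩ := Finset.mem_inter.mp hw
    refine ⟨e.symm ⟨w, hwJ⟩, ?_⟩
    have hvw : vtx (e.symm ⟨w, hwJ⟩) = w := by
      simp only [hvtx]
      rw [OrderIso.apply_symm_apply]
    rw [hvw]
    exact (Finset.mem_filter.mp hwFx).2
  -- the coloring and the contradiction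
  set Φ : (Fin m → ℕ) → Fin m := fun c => if hc : c ∈ T then (hfix c hc).choose
    else ⟨0, hm⟩ with hΦ
  obtain ⟨c, hc, c', hc', hne, hfeq, hagree⟩ := hTwin Φ
  have hΦceq : Φ c = (hfix c hc).choose := dif_pos hc
  have hΦc'eq : Φ c' = (hfix c' hc').choose := dif_pos hc'
  have hΦc : f (x c) (vtx (Φ c)) = x c (vtx (Φ c)) := by
    rw [hΦceq]; exact (hfix c hc).choose_spec
  have hΦc' : f (x c') (vtx (Φ c)) = x c' (vtx (Φ c)) := by
    rw [hfeq, hΦc'eq]; exact (hfix c' hc').choose_spec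
  have h3 : f (x c) (vtx (Φ c)) = f (x c') (vtx (Φ c)) := by
    apply indep hf
    intro w hDw
    by_cases hwv : w = vtx (Φ c)
    · subst hwv
      exact absurd hDw (hD _)
    · exact hagree_pt c c' (Φ c) hagree w hwv
  have h4 : x c (vtx (Φ c)) = x c' (vtx (Φ c)) := by
    rw [← hΦc, h3, hΦc']
  rw [hxval, hxval] at h4
  have hb1 : c (Φ c) < q := lt_of_le_of_lt (hTbd c hc _) (by omega)
  have hb2 : c' (Φ c) < q := lt_of_le_of_lt (hTbd c' hc' _) (by omega)
  have h5 := congrArg Fin.val h4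
  simp only [hι] at h5
  rw [Nat.mod_eq_of_lt hb1, Nat.mod_eq_of_lt hb2] at h5
  apply hne
  funext i
  by_cases hij : i = Φ c
  · rw [hij]; exact h5
  · exact hagree i hij

end
end Stmt14Aux

/-- with Q(m) = 2 + Σ_{a=1}^m a^a, we have s(D, Q(m)) ≤ τ(D) − m
for 1 ≤ m ≤ τ(D); in particular s(D, Q(τ)) = 0. -/
theorem stmt14 (n : ℕ) (D : Fin n → Fin n → Prop) (hD : ∀ v, ¬ D v v) :
    (∀ m, 1 ≤ m → m ≤ tau D →
      stab D (2 + ∑ a ∈ Finset.Icc 1 m, a ^ a) ≤ tau D - m) ∧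
    (1 ≤ tau D → stab D (2 + ∑ a ∈ Finset.Icc 1 (tau D), a ^ a) = 0) := by
  constructor
  · exact fun m hm hmτ => Stmt14Aux.main_bound D hD m hm hmτ
  · intro hτ
    have := Stmt14Aux.main_bound D hD (tau D) hτ le_rfl
    omega
end

section
/- For any loopless digraph D on n vertices and q ≥ 3, s(D,3) ≤ τ(D) − 1; i.e., the upper bound s(D,q) ≤ τ(D) can only be attained for q = 2 (for graphs with τ(D) ≥ 1). -/
/-- pick an element of Fin 3 different from both a and b -/
def pick3 (a b : Fin 3) : Fin 3 :=
  if 0 ≠ a ∧ 0 ≠ b then 0 else if 1 ≠ a ∧ 1 ≠ b then 1 else 2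

lemma pick3_ne : ∀ a b : Fin 3, pick3 a b ≠ a ∧ pick3 a b ≠ b := by decide

lemma locality {n : ℕ} {A : Type} [DecidableEq A] {D : Fin n → Fin n → Prop}
    {f : (Fin n → A) → (Fin n → A)} (hf : inF D f) (v : Fin n) :
    ∀ x y : Fin n → A, (∀ w, D w v → x w = y w) → f x v = f y v := by
  classical
  suffices h : ∀ k : ℕ, ∀ x y : Fin n → A,
      (Finset.univ.filter (fun w => x w ≠ y w)).card ≤ k →
      (∀ w, D w v → x w = y w) → f x v = f y v by
    intro x y hxy
    exact h _ x y le_rfl hxy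
  intro k
  induction k with
  | zero =>
    intro x y hc hxy
    have : x = y := by
      funext w
      by_contra hw
      have : w ∈ Finset.univ.filter (fun w => x w ≠ y w) := by simp [hw]
      have := Finset.card_pos.mpr ⟨w, this⟩
      omega
    rw [this]
  | succ k ih =>
    intro x y hc hxy
    by_cases hall : ∀ w, x w = y w
    · rw [funext hall]
    · push_neg at hall
      obtain ⟨w, hw⟩ := hall
      have hDw : ¬ D w v := fun h => hw (hxy w h)
      set y' := Function.update y w (x w) with hy'
      have h1 : f x v = f y' v := by
        apply ih
        · have hsub : (Finset.univ.filter (fun z => x z ≠ y' z)) ⊆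
              (Finset.univ.filter (fun z => x z ≠ y z)).erase w := by
            intro z hz
            simp only [Finset.mem_filter, Finset.mem_univ, true_and] at hz
            rcases eq_or_ne z w with rfl | hzw
            · exact absurd (by simp [hy', Function.update_self]) hz
            · simp only [Finset.mem_erase, Finset.mem_filter, Finset.mem_univ, true_and]
              refine ⟨hzw, ?_⟩
              simpa [hy', Function.update_of_ne hzw] using hz
          calc (Finset.univ.filter (fun z => x z ≠ y' z)).card
              ≤ ((Finset.univ.filter (fun z => x z ≠ y z)).erase w).card :=
                Finset.card_le_card hsub
            _ ≤ (Finset.univ.filter (fun z => x z ≠ y z)).card - 1 := by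
                rw [Finset.card_erase_of_mem (by simp [hw])]
            _ ≤ k := by omega
        · intro z hz
          rcases eq_or_ne z w with rfl | hzw
          · exact absurd hz hDw
          · rw [hy', Function.update_of_ne hzw]; exact hxy z hz
      have h2 : f y' v = f y v := by
        by_contra hne
        exact hDw (hf w v ⟨y', y, fun z hz => by rw [hy', Function.update_of_ne hz], hne⟩)
      rw [h1, h2]

lemma wfR {n : ℕ} {D : Fin n → Fin n → Prop} {I : Finset (Fin n)} (hI : isFVS D I) :
    WellFounded (fun a b : Fin n => D a b ∧ a ∉ I ∧ b ∉ I) := by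
  set R := fun a b : Fin n => D a b ∧ a ∉ I ∧ b ∉ I with hR
  have : WellFounded (Relation.TransGen R) := by
    haveI : IsTrans (Fin n) (Relation.TransGen R) := ⟨fun _ _ _ h h' => h.trans h'⟩
    haveI : IsIrrefl (Fin n) (Relation.TransGen R) := ⟨hI⟩
    exact Finite.wellFounded_of_trans_of_irrefl _
  exact Subrelation.wf (fun h => Relation.TransGen.single h) this

/-- boundary values on the FVS: (0,1) at u, (0,0) elsewhere -/
def bse {n : ℕ} (u w : Fin n) : Fin 3 × Fin 3 := if w = u then (0, 1) else (0, 0)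

open Classical in
noncomputable def gfun {n : ℕ} (D : Fin n → Fin n → Prop) (I : Finset (Fin n)) (u : Fin n)
    (f : (Fin n → Fin 3) → Fin n → Fin 3)
    (wf : WellFounded (fun a b : Fin n => D a b ∧ a ∉ I ∧ b ∉ I)) : Fin n → Fin 3 × Fin 3 :=
  wf.fix (fun v rec =>
    if v ∈ I then bse u v
    else
      let xw : Fin n → Fin 3 × Fin 3 := fun w =>
        if h : D w v ∧ w ∉ I ∧ v ∉ I then rec w h
        else (if w ∈ I then bse u w else (0, 0))
      let c := pick3 (f (fun w => (xw w).1) v) (f (fun w => (xw w).2) v)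
      (c, c))

open Classical in
/-- the "previous values" function used at vertex v -/
noncomputable def xwf {n : ℕ} (D : Fin n → Fin n → Prop) (I : Finset (Fin n)) (u : Fin n)
    (f : (Fin n → Fin 3) → Fin n → Fin 3)
    (wf : WellFounded (fun a b : Fin n => D a b ∧ a ∉ I ∧ b ∉ I)) (v w : Fin n) :
    Fin 3 × Fin 3 :=
  if D w v ∧ w ∉ I ∧ v ∉ I then gfun D I u f wf w
  else (if w ∈ I then bse u w else (0, 0))

open Classical in
lemma gfun_eq {n : ℕ} (D : Fin n → Fin n → Prop) (I : Finset (Fin n)) (u : Fin n)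
    (f : (Fin n → Fin 3) → Fin n → Fin 3)
    (wf : WellFounded (fun a b : Fin n => D a b ∧ a ∉ I ∧ b ∉ I)) (v : Fin n) :
    gfun D I u f wf v =
      if v ∈ I then bse u v
      else (pick3 (f (fun w => (xwf D I u f wf v w).1) v) (f (fun w => (xwf D I u f wf v w).2) v),
            pick3 (f (fun w => (xwf D I u f wf v w).1) v) (f (fun w => (xwf D I u f wf v w).2) v)) := by
  conv_lhs => rw [gfun, WellFounded.fix_eq]
  simp only [xwf, gfun]
  rfl

lemma main_lemma {n : ℕ} {D : Fin n → Fin n → Prop} (hD : ∀ v, ¬ D v v)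
    (I : Finset (Fin n)) (hI : isFVS D I) (u : Fin n) (hu : u ∈ I)
    (f : (Fin n → Fin 3) → Fin n → Fin 3) (hf : inF D f) :
    ∃ z, (Finset.univ.filter (fun v => f z v = z v)).card ≤ (I.erase u).card := by
  classical
  have wf := wfR hI
  set x : Fin n → Fin 3 := fun v => (gfun D I u f wf v).1 with hxdef
  set y : Fin n → Fin 3 := fun v => (gfun D I u f wf v).2 with hydef
  have hxw : ∀ w, x w = (gfun D I u f wf w).1 := fun w => rfl
  have hyw : ∀ w, y w = (gfun D I u f wf w).2 := fun w => rfl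
  have hgI : ∀ w, w ∈ I → gfun D I u f wf w = bse u w := by
    intro w hw
    rw [gfun_eq, if_pos hw]
  have hxu : x u = 0 := by rw [hxw, hgI u hu, bse, if_pos rfl]
  have hyu : y u = 1 := by rw [hyw, hgI u hu, bse, if_pos rfl]
  -- x and y agree off u
  have hxy : ∀ w, w ≠ u → x w = y w := by
    intro w hwu
    rw [hxw, hyw]
    by_cases hw : w ∈ I
    · rw [hgI w hw, bse, if_neg hwu]
    · rw [gfun_eq, if_neg hw]
  -- mismatch outside I
  have hmis : ∀ v, v ∉ I → f x v ≠ x v ∧ f y v ≠ y v := by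
    intro v hv
    have hveq := gfun_eq D I u f wf v
    rw [if_neg hv] at hveq
    have hxagree : ∀ w, D w v → (xwf D I u f wf v w).1 = x w := by
      intro w hDwv
      by_cases hw : w ∈ I
      · have hn : ¬ (D w v ∧ w ∉ I ∧ v ∉ I) := by tauto
        rw [xwf, if_neg hn, if_pos hw, hxw, hgI w hw]
      · have hp : D w v ∧ w ∉ I ∧ v ∉ I := ⟨hDwv, hw, hv⟩
        rw [xwf, if_pos hp, hxw]
    have hyagree : ∀ w, D w v → (xwf D I u f wf v w).2 = y w := by
      intro w hDwv
      by_cases hw : w ∈ I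
      · have hn : ¬ (D w v ∧ w ∉ I ∧ v ∉ I) := by tauto
        rw [xwf, if_neg hn, if_pos hw, hyw, hgI w hw]
      · have hp : D w v ∧ w ∉ I ∧ v ∉ I := ⟨hDwv, hw, hv⟩
        rw [xwf, if_pos hp, hyw]
    have hfx : f (fun w => (xwf D I u f wf v w).1) v = f x v :=
      locality hf v _ _ (fun w h => hxagree w h)
    have hfy : f (fun w => (xwf D I u f wf v w).2) v = f y v :=
      locality hf v _ _ (fun w h => hyagree w h)
    have hxv : x v = pick3 (f x v) (f y v) := by
      rw [hxw, hveq, ← hfx, ← hfy]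
    have hyv : y v = pick3 (f x v) (f y v) := by
      rw [hyw, hveq, ← hfx, ← hfy]
    constructor
    · rw [hxv]; exact fun h => (pick3_ne (f x v) (f y v)).1 h.symm
    · rw [hyv]; exact fun h => (pick3_ne (f x v) (f y v)).2 h.symm
  -- f x u = f y u since D is loopless
  have hfu : f x u = f y u := by
    apply locality hf u
    intro w hDwu
    have hwu : w ≠ u := fun h => hD u (h ▸ hDwu)
    exact hxy w hwu
  -- choose z among x, y disagreeing at u too
  have hz : ∃ z, (∀ v, v ∉ I → f z v ≠ z v) ∧ f z u ≠ z u := by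
    by_cases h : f x u = x u
    · refine ⟨y, fun v hv => (hmis v hv).2, ?_⟩
      rw [← hfu, h, hxu, hyu]; decide
    · exact ⟨x, fun v hv => (hmis v hv).1, h⟩
  obtain ⟨z, hz1, hz2⟩ := hz
  refine ⟨z, Finset.card_le_card ?_⟩
  intro v hvmem
  simp only [Finset.mem_filter, Finset.mem_univ, true_and] at hvmem
  have hvI : v ∈ I := by
    by_contra hv
    exact hz1 v hv hvmem
  have hvu : v ≠ u := by
    rintro rfl
    exact hz2 hvmem
  exact Finset.mem_erase.mpr ⟨hvu, hvI⟩

/-- s(D,3) ≤ τ(D) − 1 whenever τ(D) ≥ 1. -/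
theorem stmt15 (n : ℕ) (D : Fin n → Fin n → Prop) (hD : ∀ v, ¬ D v v)
    (htau : 1 ≤ tau D) :
    stab D 3 ≤ tau D - 1 := by
  classical
  have huniv : isFVS D Finset.univ := by
    intro v h
    cases h with
    | single h => exact h.2.1 (Finset.mem_univ _)
    | tail _ h => exact h.2.1 (Finset.mem_univ _)
  have hne : {k | ∃ I : Finset (Fin n), isFVS D I ∧ I.card = k}.Nonempty :=
    ⟨Finset.univ.card, Finset.univ, huniv, rfl⟩
  obtain ⟨I, hIfvs, hIcard⟩ : ∃ I : Finset (Fin n), isFVS D I ∧ I.card = tau D :=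
    Nat.sInf_mem hne
  obtain ⟨u, hu⟩ : ∃ u, u ∈ I := Finset.card_pos.mp (by omega)
  apply csSup_le'
  rintro m ⟨f, hf, hm⟩
  obtain ⟨z, hz⟩ := main_lemma hD I hIfvs u hu f hf
  calc m ≤ (Finset.univ.filter (fun v => f z v = z v)).card := hm z
    _ ≤ (I.erase u).card := hz
    _ = I.card - 1 := Finset.card_erase_of_mem hu
    _ = tau D - 1 := by rw [hIcard]
end

section
/- Let D be a loopless digraph on n vertices, q ≥ 2, τ = τ(D), i = i(D,q), and g(D,q) = log_q of the maximum number of fixed points over f ∈ F(D,q). Then q^{g(D,q)} ≥ q^τ / (q^τ − V_H(q, τ, i − 1)), where V_H(q,τ,t) = Σ_{d=0}^t C(τ,d)(q−1)^d is the volume of the Hamming ball of radius t in (Fin q)^τ. Equivalently, (number of fixed points achievable) · (q^τ − V_H(q, τ, i−1)) ≥ q^τ. -/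
open Finset

lemma eq_of_not_dependsOn_aux {n : ℕ} {A : Type} [DecidableEq A] (fv : (Fin n → A) → A) :
    ∀ (k : ℕ) (x y : Fin n → A),
      (univ.filter (fun u => x u ≠ y u)).card ≤ k →
      (∀ u, x u ≠ y u → ¬ dependsOn fv u) → fv x = fv y := by
  intro k
  induction k with
  | zero =>
    intro x y hc _
    have : ∀ u, x u = y u := by
      intro u
      by_contra hu
      have : u ∈ univ.filter (fun u => x u ≠ y u) := by simp [hu]
      have := card_pos.2 ⟨u, this⟩
      omega
    exact congrArg fv (funext this)
  | succ k ih =>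
    intro x y hc h
    by_cases hxy : ∀ u, x u = y u
    · exact congrArg fv (funext hxy)
    · push_neg at hxy
      obtain ⟨u, hu⟩ := hxy
      have h1 : fv x = fv (Function.update x u (y u)) := by
        by_contra hne
        exact h u hu ⟨x, _, fun w hw => (Function.update_of_ne hw _ _).symm, hne⟩
      rw [h1]
      have hmem : u ∈ univ.filter (fun u => x u ≠ y u) := by simp [hu]
      apply ih
      · have hsub : univ.filter (fun w => Function.update x u (y u) w ≠ y w) ⊆
            (univ.filter (fun w => x w ≠ y w)).erase u := by
          intro w hw
          simp only [mem_filter, mem_univ, true_and] at hw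
          have hwu : w ≠ u := by
            intro h'
            subst h'
            exact hw (Function.update_self _ _ _)
          rw [Function.update_of_ne hwu] at hw
          exact mem_erase.2 ⟨hwu, by simp [hw]⟩
        have := card_le_card hsub
        have := card_erase_of_mem hmem
        omega
      · intro w hw
        have hwu : w ≠ u := by
          intro h'
          subst h'
          exact hw (Function.update_self _ _ _)
        rw [Function.update_of_ne hwu] at hw
        exact h w hw

lemma eq_of_not_dependsOn {n : ℕ} {A : Type} [DecidableEq A] (fv : (Fin n → A) → A)
    (x y : Fin n → A) (h : ∀ u, x u ≠ y u → ¬ dependsOn fv u) : fv x = fv y :=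
  eq_of_not_dependsOn_aux fv _ x y le_rfl h

lemma isFVS_wf {n : ℕ} {D : Fin n → Fin n → Prop} {I : Finset (Fin n)} (h : isFVS D I) :
    WellFounded (fun a b : Fin n => D a b ∧ a ∉ I ∧ b ∉ I) := by
  set E := fun a b : Fin n => D a b ∧ a ∉ I ∧ b ∉ I with hE
  haveI : IsIrrefl (Fin n) (Relation.TransGen E) := ⟨h⟩
  have wfT : WellFounded (Relation.TransGen E) :=
    Finite.wellFounded_of_trans_of_irrefl _
  exact Subrelation.wf (fun {a b} hab => Relation.TransGen.single hab) wfT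

open scoped Classical in
noncomputable def fvsClosure {n q : ℕ} (D : Fin n → Fin n → Prop) (I : Finset (Fin n))
    (hwf : WellFounded (fun a b : Fin n => D a b ∧ a ∉ I ∧ b ∉ I))
    (f : (Fin n → Fin q) → (Fin n → Fin q)) (x : Fin n → Fin q) : Fin n → Fin q :=
  hwf.fix (fun v rec =>
    if v ∈ I then x v
    else f (fun u => if h : (D u v ∧ u ∉ I ∧ v ∉ I) then rec u h else x u) v)

open scoped Classical in
lemma closure_mem {n q : ℕ} (D : Fin n → Fin n → Prop) (I : Finset (Fin n))
    (hwf : WellFounded (fun a b : Fin n => D a b ∧ a ∉ I ∧ b ∉ I))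
    (f : (Fin n → Fin q) → (Fin n → Fin q)) (x : Fin n → Fin q)
    {v : Fin n} (hv : v ∈ I) : fvsClosure D I hwf f x v = x v := by
  rw [fvsClosure, hwf.fix_eq]
  simp [hv]

open scoped Classical in
lemma closure_spec {n q : ℕ} (D : Fin n → Fin n → Prop) (I : Finset (Fin n))
    (hwf : WellFounded (fun a b : Fin n => D a b ∧ a ∉ I ∧ b ∉ I))
    (f : (Fin n → Fin q) → (Fin n → Fin q)) (x : Fin n → Fin q) (v : Fin n) :
    fvsClosure D I hwf f x v = if v ∈ I then x v
      else f (fun u => if h : (D u v ∧ u ∉ I ∧ v ∉ I) then fvsClosure D I hwf f x u else x u) v := by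
  rw [fvsClosure, hwf.fix_eq]

lemma closure_mem' {n q : ℕ} (D : Fin n → Fin n → Prop) (I : Finset (Fin n))
    (hwf : WellFounded (fun a b : Fin n => D a b ∧ a ∉ I ∧ b ∉ I))
    (f : (Fin n → Fin q) → (Fin n → Fin q)) (x : Fin n → Fin q)
    {v : Fin n} (hv : v ∈ I) : fvsClosure D I hwf f x v = x v := by
  rw [closure_spec, if_pos hv]

open scoped Classical in
lemma closure_not_mem {n q : ℕ} (D : Fin n → Fin n → Prop) (I : Finset (Fin n))
    (hwf : WellFounded (fun a b : Fin n => D a b ∧ a ∉ I ∧ b ∉ I))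
    (f : (Fin n → Fin q) → (Fin n → Fin q)) (hf : inF D f) (x : Fin n → Fin q)
    {v : Fin n} (hv : v ∉ I) : f (fvsClosure D I hwf f x) v = fvsClosure D I hwf f x v := by
  conv_rhs => rw [closure_spec D I hwf f x v, if_neg hv]
  apply eq_of_not_dependsOn (fun z => f z v)
  intro u hu hdep
  have hD := hf u v hdep
  apply hu
  by_cases hI : u ∈ I
  · rw [dif_neg (by tauto), closure_mem' D I hwf f x hI]
  · rw [dif_pos ⟨hD, hI, hv⟩]

lemma ball_lower {β : Type} [Fintype β] [DecidableEq β] (q i : ℕ) [NeZero q] :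
    ∑ d ∈ Finset.range i, (Fintype.card β).choose d * (q - 1) ^ d ≤
      (Finset.univ.filter (fun w : β → Fin q =>
        (Finset.univ.filter (fun u => w u ≠ 0)).card < i)).card := by
  classical
  set T := (Finset.range i).biUnion (fun d => (Finset.univ : Finset β).powersetCard d) with hT
  set A := fun s : Finset β =>
    Finset.univ.filter (fun w : β → Fin q => Finset.univ.filter (fun u => w u ≠ 0) = s) with hA
  have hdisj : ∀ s ∈ T, ∀ t ∈ T, s ≠ t → Disjoint (A s) (A t) := by
    intro s _ t _ hst
    rw [Finset.disjoint_left]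
    intro w hw1 hw2
    rw [hA] at hw1 hw2
    simp only [Finset.mem_filter] at hw1 hw2
    exact hst (hw1.2 ▸ hw2.2)
  have hsubset : T.biUnion A ⊆ Finset.univ.filter (fun w : β → Fin q =>
      (Finset.univ.filter (fun u => w u ≠ 0)).card < i) := by
    intro w hw
    obtain ⟨s, hsT, hws⟩ := Finset.mem_biUnion.1 hw
    rw [hT] at hsT
    obtain ⟨d, hd, hsd⟩ := Finset.mem_biUnion.1 hsT
    rw [Finset.mem_powersetCard_univ] at hsd
    rw [hA] at hws
    simp only [Finset.mem_filter] at hws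
    simp only [Finset.mem_filter, Finset.mem_univ, true_and]
    rw [hws.2, hsd]
    exact Finset.mem_range.1 hd
  have hq1 : 1 ≤ q := Nat.one_le_iff_ne_zero.2 (NeZero.ne q)
  have cardA : ∀ s : Finset β, (q - 1) ^ s.card ≤ (A s).card := by
    intro s
    have hinj := Finset.card_le_card_of_injOn
      (f := fun g : {u // u ∈ s} → Fin (q - 1) =>
        fun u : β => if h : u ∈ s then (⟨(g ⟨u, h⟩ : ℕ) + 1, by
          have := (g ⟨u, h⟩).isLt; omega⟩ : Fin q) else 0)
      (s := (Finset.univ : Finset ({u // u ∈ s} → Fin (q - 1)))) (t := A s)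
      ?_ ?_
    · calc (q - 1) ^ s.card
          = (Finset.univ : Finset ({u // u ∈ s} → Fin (q - 1))).card := by
            rw [Finset.card_univ, Fintype.card_fun, Fintype.card_fin, Fintype.card_coe]
        _ ≤ (A s).card := hinj
    · intro g _
      rw [hA]
      simp only [Finset.mem_coe, Finset.mem_filter, Finset.mem_univ, true_and]
      ext u
      simp only [Finset.mem_filter, Finset.mem_univ, true_and]
      constructor
      · intro hu
        by_contra h
        rw [dif_neg h] at hu
        exact hu rfl
      · intro hu
        rw [dif_pos hu]
        intro h
        have := congrArg Fin.val h
        simp at this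
    · intro g1 h1 g2 h2 hgg
      funext u
      obtain ⟨u, hu⟩ := u
      have h3 := congrFun hgg u
      simp only [dif_pos hu] at h3
      have h4 := congrArg Fin.val h3
      simp only at h4
      exact Fin.ext (by omega)
  calc ∑ d ∈ Finset.range i, (Fintype.card β).choose d * (q - 1) ^ d
      = ∑ s ∈ T, (q - 1) ^ s.card := by
        rw [hT, Finset.sum_biUnion]
        · apply Finset.sum_congr rfl
          intro d _
          rw [Finset.sum_congr rfl (fun s hs => by
            rw [Finset.mem_powersetCard_univ.1 hs])]
          rw [Finset.sum_const, Finset.card_powersetCard, Finset.card_univ, smul_eq_mul]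
        · intro d1 _ d2 _ hd
          simp only [Function.onFun]
          rw [Finset.disjoint_left]
          intro s hs1 hs2
          rw [Finset.mem_powersetCard_univ] at hs1 hs2
          exact hd (by rw [← hs1, ← hs2])
    _ ≤ ∑ s ∈ T, (A s).card := Finset.sum_le_sum (fun s _ => cardA s)
    _ = (T.biUnion A).card := (Finset.card_biUnion hdisj).symm
    _ ≤ _ := Finset.card_le_card hsubset

/-- (max number of fixed points) · (q^τ − V_H(q,τ,i−1)) ≥ q^τ,
where V_H(q,τ,i−1) = Σ_{d=0}^{i−1} C(τ,d)(q−1)^d. -/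
theorem stmt17 (n q : ℕ) (hq : 2 ≤ q) (D : Fin n → Fin n → Prop)
    (hD : ∀ v, ¬ D v v) :
    ∃ f : (Fin n → Fin q) → (Fin n → Fin q), inF D f ∧
      q ^ tau D ≤ (Finset.univ.filter (fun x : Fin n → Fin q => f x = x)).card *
        (q ^ tau D - ∑ d ∈ Finset.range (instab D q), (tau D).choose d * (q - 1) ^ d) := by
  classical
  haveI : NeZero q := ⟨by omega⟩
  -- a minimum feedback vertex set
  have htau : tau D ∈ {k | ∃ I : Finset (Fin n), isFVS D I ∧ I.card = k} := by
    apply Nat.sInf_mem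
    refine ⟨(Finset.univ : Finset (Fin n)).card, Finset.univ, ?_, rfl⟩
    intro v hv
    cases hv with
    | single h => exact h.2.1 (Finset.mem_univ _)
    | tail _ h => exact h.2.1 (Finset.mem_univ _)
  obtain ⟨I, hI, hIcard⟩ := htau
  -- a network attaining the instability
  have hi : instab D q ∈ {m | ∃ f : (Fin n → Fin q) → (Fin n → Fin q), inF D f ∧
      ∀ x, m ≤ hammingDist x (f x)} := by
    apply Nat.sSup_mem
    · refine ⟨0, (fun _ _ => 0), ?_, fun x => Nat.zero_le _⟩
      intro u v hdep
      obtain ⟨x, y, _, hne⟩ := hdep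
      exact absurd rfl hne
    · refine ⟨n, ?_⟩
      rintro m ⟨f, -, hf⟩
      calc m ≤ hammingDist (fun _ => (0 : Fin q)) (f fun _ => 0) := hf _
        _ ≤ Fintype.card (Fin n) := hammingDist_le_card_fintype
        _ = n := Fintype.card_fin n
  obtain ⟨f, hfF, hf⟩ := hi
  set i := instab D q with hidef
  have hwf := isFVS_wf hI
  set βI := {v : Fin n // v ∈ I} with hβI
  set ext : (βI → Fin q) → Fin n → Fin q :=
    fun y v => if h : v ∈ I then y ⟨v, h⟩ else 0 with hext
  set C : (βI → Fin q) → Fin n → Fin q :=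
    fun y => fvsClosure D I hwf f (ext y) with hC
  have hCmem : ∀ (y : βI → Fin q) (v : Fin n) (h : v ∈ I), C y v = y ⟨v, h⟩ := by
    intro y v h
    simp only [hC]
    rw [closure_mem' D I hwf f (ext y) h]
    simp only [hext, dif_pos h]
  have hCeq : ∀ (y : βI → Fin q) (v : Fin n), v ∉ I → f (C y) v = C y v := by
    intro y v h
    simp only [hC]
    exact closure_not_mem D I hwf f hfF (ext y) h
  set Φ : (βI → Fin q) → βI → Fin q := fun y u => f (C y) u.1 with hΦ
  set ψ : (βI → Fin q) → βI → Fin q := fun y u => y u - Φ y u with hψ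
  -- claim 1 : every ψ y has Hamming weight at least i
  have hnorm : ∀ y, i ≤ (Finset.univ.filter (fun u : βI => ψ y u ≠ 0)).card := by
    intro y
    have h0 : i ≤ hammingDist (C y) (f (C y)) := hf (C y)
    have hmemI : ∀ v ∈ Finset.univ.filter (fun v => C y v ≠ f (C y) v), v ∈ I := by
      intro v hv
      by_contra h'
      exact (Finset.mem_filter.1 hv).2 (hCeq y v h').symm
    have hcards : hammingDist (C y) (f (C y)) =
        (Finset.univ.filter (fun u : βI => ψ y u ≠ 0)).card := by
      rw [show hammingDist (C y) (f (C y)) =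
        (Finset.univ.filter (fun v => C y v ≠ f (C y) v)).card from rfl]
      apply Finset.card_bij (fun v hv => (⟨v, hmemI v hv⟩ : βI))
      · intro v hv
        have hv' := (Finset.mem_filter.1 hv).2
        simp only [Finset.mem_filter, Finset.mem_univ, true_and, hψ, hΦ]
        rw [sub_ne_zero]
        rw [hCmem y v (hmemI v hv)] at hv'
        exact hv'
      · intro a ha b hb hab
        exact congrArg Subtype.val hab
      · intro u hu
        simp only [Finset.mem_filter, Finset.mem_univ, true_and, hψ, hΦ] at hu
        rw [sub_ne_zero] at hu
        refine ⟨u.1, ?_, rfl⟩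
        simp only [Finset.mem_filter, Finset.mem_univ, true_and]
        rw [hCmem y u.1 u.2]
        exact hu
    omega
  -- fiber counting
  set Sg : Finset (βI → Fin q) := Finset.univ.filter
    (fun w => i ≤ (Finset.univ.filter (fun u => w u ≠ 0)).card) with hSg
  have hfiber : (Finset.univ : Finset (βI → Fin q)).card
      = ∑ b ∈ Sg, (Finset.univ.filter (fun y => ψ y = b)).card := by
    apply Finset.card_eq_sum_card_fiberwise
    intro y _
    rw [hSg]
    exact Finset.mem_filter.2 ⟨Finset.mem_univ _, hnorm y⟩
  have hcardβ : Fintype.card βI = tau D := by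
    have : Fintype.card βI = I.card := Fintype.card_coe I
    rw [this, hIcard]
  have hcardU : (Finset.univ : Finset (βI → Fin q)).card = q ^ tau D := by
    rw [Finset.card_univ, Fintype.card_fun, Fintype.card_fin, hcardβ]
  have hqpos : 0 < q ^ tau D := pow_pos (by omega) _
  have hSgne : Sg.Nonempty := by
    by_contra h
    rw [Finset.not_nonempty_iff_eq_empty] at h
    rw [h, Finset.sum_empty, hcardU] at hfiber
    omega
  obtain ⟨b, hbSg, hbmax⟩ := Finset.exists_max_image Sg
    (fun b => (Finset.univ.filter (fun y => ψ y = b)).card) hSgne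
  have hsum : q ^ tau D ≤ Sg.card * (Finset.univ.filter (fun y => ψ y = b)).card := by
    calc q ^ tau D = ∑ b' ∈ Sg, (Finset.univ.filter (fun y => ψ y = b')).card := by
          rw [← hcardU]; exact hfiber
      _ ≤ ∑ _b' ∈ Sg, (Finset.univ.filter (fun y => ψ y = b)).card :=
          Finset.sum_le_sum (fun b' hb' => hbmax b' hb')
      _ = Sg.card * (Finset.univ.filter (fun y => ψ y = b)).card := by
          rw [Finset.sum_const, smul_eq_mul]
  -- the translated network
  set g : (Fin n → Fin q) → Fin n → Fin q :=
    fun x v => if h : v ∈ I then f x v + b ⟨v, h⟩ else f x v with hg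
  have hgF : inF D g := by
    intro u v hdep
    apply hfF u v
    obtain ⟨x, y, hxy, hne⟩ := hdep
    refine ⟨x, y, hxy, ?_⟩
    intro hEq
    change f x v = f y v at hEq
    apply hne
    change g x v = g y v
    simp only [hg]
    by_cases h : v ∈ I
    · rw [dif_pos h, dif_pos h, hEq]
    · rw [dif_neg h, dif_neg h, hEq]
  have hfix : (Finset.univ.filter (fun y : βI → Fin q => ψ y = b)).card ≤
      (Finset.univ.filter (fun x : Fin n → Fin q => g x = x)).card := by
    apply Finset.card_le_card_of_injOn C
    · intro y hy
      have hy' := (Finset.mem_filter.1 hy).2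
      simp only [Finset.mem_coe, Finset.mem_filter, Finset.mem_univ, true_and]
      funext v
      by_cases h : v ∈ I
      · rw [hg]
        simp only [dif_pos h]
        rw [hCmem y v h]
        have h5 := congrFun hy' ⟨v, h⟩
        simp only [hψ] at h5
        rw [← h5, hΦ]
        exact add_sub_cancel _ _
      · rw [hg]
        simp only [dif_neg h]
        exact hCeq y v h
    · intro y1 _ y2 _ hCy
      funext u
      have h6 := congrFun hCy u.1
      rw [hCmem y1 u.1 u.2, hCmem y2 u.1 u.2] at h6
      exact h6
  -- the Hamming ball bound
  have hball := ball_lower (β := βI) q i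
  rw [hcardβ] at hball
  have hsplit : Sg.card + (Finset.univ.filter (fun w : βI → Fin q =>
      (Finset.univ.filter (fun u => w u ≠ 0)).card < i)).card = q ^ tau D := by
    have h7 := Finset.card_filter_add_card_filter_not
      (s := (Finset.univ : Finset (βI → Fin q)))
      (p := fun w => i ≤ (Finset.univ.filter (fun u => w u ≠ 0)).card)
    simp only [not_le] at h7
    rw [hcardU] at h7
    rw [hSg]
    exact h7
  refine ⟨g, hgF, ?_⟩
  have hle : Sg.card ≤ q ^ tau D -
      ∑ d ∈ Finset.range i, (tau D).choose d * (q - 1) ^ d := by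
    have h9 : Sg.card = q ^ tau D - (Finset.univ.filter (fun w : βI → Fin q =>
        (Finset.univ.filter (fun u => w u ≠ 0)).card < i)).card :=
      Nat.eq_sub_of_add_eq hsplit
    rw [h9]
    exact Nat.sub_le_sub_left hball _
  calc q ^ tau D ≤ Sg.card * (Finset.univ.filter (fun y => ψ y = b)).card := hsum
    _ ≤ (q ^ tau D - ∑ d ∈ Finset.range i, (tau D).choose d * (q - 1) ^ d) *
        (Finset.univ.filter (fun y => ψ y = b)).card :=
          Nat.mul_le_mul_right _ hle
    _ ≤ (q ^ tau D - ∑ d ∈ Finset.range i, (tau D).choose d * (q - 1) ^ d) *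
        (Finset.univ.filter (fun x : Fin n → Fin q => g x = x)).card :=
          Nat.mul_le_mul_left _ hfix
    _ = _ := mul_comm _ _
end
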